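/- arXiv:math/0206037 — 7 statements merged into one kernel-verified Lean document; each statement's English description precedes it below -/
import Mathlib

section
/- (Quantitative implicit function theorem.) Let j, m ≥ 1, v₀ ∈ ℝʲ, y₀ ∈ ℝᵐ, r₁, r₂ > 0, and let B₁ be the closed ball of radius r₁ centered at v₀ in ℝʲ and B₂ the closed ball of radius r₂ centered at y₀ in ℝᵐ. Let F be an ℝʲ-valued map defined on an open set O ⊆ ℝʲ × ℝᵐ with B₁ × B₂ ⊆ O, such that F and the partial derivative ∂F/∂v (the Fréchet derivative of v ↦ F(v,y)) exist and are continuous on B₁ × B₂. Assume: F(v₀,y₀) = 0; ∂F/∂v(v₀,y₀) is invertible with inverse T₀; sup_{y ∈ B₂} |F(v₀,y)| ≤ r₁/(2‖T₀‖); and sup_{(v,y) ∈ B₁×B₂} ‖I_j − T₀ ∘ (∂F/∂v)(v,y)‖ ≤ 1/2, where I_j is the identity on ℝʲ. Then there exists a unique continuous map q : B₂ → B₁ such that q(y₀) = v₀ and, for every (v,y) ∈ B₁ × B₂, F(v,y) = 0 if and only if v = q(y). -/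
/-!
For each parameter `y`, the zeros of `v ↦ F (v, y)` in `B₁` are the fixed points of the
simplified Newton map `v ↦ v - T₀ (F (v, y))`. The bound on `id - T₀ ∘ ∂F/∂v` and the mean
value theorem make this map a `1/2`-contraction of `B₁`, and the bound on `F (v₀, y)` makes it
send `B₁` into itself, so Banach's fixed point theorem yields a unique zero `q y`. Since the
contraction constant is uniform in `y`, `‖q y - q y'‖` is controlled by how much the map moves
the point `q y'` when the parameter changes, which gives continuity of `q`.
-/

open Metric Set Filter Topology Function
open scoped NNReal

section ParametricContraction

variable {X P : Type*} [MetricSpace X] [TopologicalSpace P] {s : Set X} {K : ℝ≥0}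

theorem LipschitzOnWith.eq_of_isFixedPt {f : X → X} (hf : LipschitzOnWith K f s) (hK : K < 1)
    {x x' : X} (hx : x ∈ s) (hx' : x' ∈ s) (hfx : IsFixedPt f x) (hfx' : IsFixedPt f x') :
    x = x' := by
  have hle := hf.dist_le_mul x hx x' hx'
  rw [hfx.eq, hfx'.eq] at hle
  have hK' : (K : ℝ) < 1 := hK
  exact dist_le_zero.mp (by nlinarith [dist_nonneg (x := x) (y := x')])

theorem LipschitzOnWith.exists_isFixedPt {f : X → X} (hf : LipschitzOnWith K f s) (hK : K < 1)
    (hs : IsComplete s) (hne : s.Nonempty) (hsf : MapsTo f s s) : ∃ x ∈ s, IsFixedPt f x := by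
  obtain ⟨x₀, hx₀⟩ := hne
  obtain ⟨x, hx, hfx, -⟩ := ContractingWith.exists_fixedPoint' hs hsf
    ⟨hK, hsf.lipschitzOnWith_iff_restrict.mp hf⟩ hx₀ (edist_ne_top _ _)
  exact ⟨x, hx, hfx⟩

theorem LipschitzOnWith.dist_le_of_isFixedPt {f g : X → X} (hf : LipschitzOnWith K f s)
    (hK : K < 1) {x x' : X} (hx : x ∈ s) (hx' : x' ∈ s) (hfx : IsFixedPt f x)
    (hgx' : IsFixedPt g x') : dist x x' ≤ dist (f x') (g x') / (1 - K) := by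
  have hK' : (K : ℝ) < 1 := hK
  have hle : dist x x' ≤ K * dist x x' + dist (f x') (g x') := calc
    dist x x' = dist (f x) (g x') := by rw [hfx.eq, hgx'.eq]
    _ ≤ dist (f x) (f x') + dist (f x') (g x') := dist_triangle _ _ _
    _ ≤ K * dist x x' + dist (f x') (g x') := by gcongr; exact hf.dist_le_mul x hx x' hx'
  rw [le_div_iff₀ (by linarith)]
  linarith

theorem exists_continuousOn_isFixedPt_iff {t : Set P} (Φ : P → X → X) (hK : K < 1)
    (hs : IsComplete s) (hne : s.Nonempty) (hmaps : ∀ y ∈ t, MapsTo (Φ y) s s)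
    (hlip : ∀ y ∈ t, LipschitzOnWith K (Φ y) s)
    (hcont : ∀ x ∈ s, ContinuousOn (fun y ↦ Φ y x) t) :
    ∃ q : P → X, MapsTo q t s ∧ ContinuousOn q t ∧
      ∀ y ∈ t, ∀ x ∈ s, IsFixedPt (Φ y) x ↔ x = q y := by
  have : Nonempty X := hne.to_subtype.map Subtype.val
  choose! q hqs hqfix using fun y (hy : y ∈ t) ↦
    (hlip y hy).exists_isFixedPt hK hs hne (hmaps y hy)
  refine ⟨q, hqs, fun y' hy' ↦ ?_, fun y hy x hx ↦
    ⟨fun hfx ↦ (hlip y hy).eq_of_isFixedPt hK hx (hqs y hy) hfx (hqfix y hy), ?_⟩⟩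
  · have hmove : Tendsto (fun y ↦ dist (Φ y (q y')) (Φ y' (q y')) / (1 - K)) (𝓝[t] y')
        (𝓝 0) := by
      simpa using ((hcont _ (hqs y' hy') y' hy').dist
        (tendsto_const_nhds (x := Φ y' (q y')))).div_const (1 - (K : ℝ))
    refine tendsto_iff_dist_tendsto_zero.mpr (squeeze_zero' (.of_forall fun _ ↦ dist_nonneg)
      ?_ hmove)
    filter_upwards [self_mem_nhdsWithin] with y hy
    exact (hlip y hy).dist_le_of_isFixedPt hK (hqs y hy) (hqs y' hy') (hqfix y hy) (hqfix y' hy')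
  · rintro rfl
    exact hqfix y hy

end ParametricContraction

theorem LipschitzOnWith.mapsTo_closedBall {X : Type*} [PseudoMetricSpace X] {f : X → X}
    {K : ℝ≥0} {x : X} {r : ℝ} (hf : LipschitzOnWith K f (closedBall x r))
    (hx : dist (f x) x ≤ (1 - K) * r) : MapsTo f (closedBall x r) (closedBall x r) := by
  intro v hv
  have hr : 0 ≤ r := dist_nonneg.trans (mem_closedBall.mp hv)
  rw [mem_closedBall] at hv ⊢
  calc dist (f v) x ≤ dist (f v) (f x) + dist (f x) x := dist_triangle _ _ _
    _ ≤ K * r + (1 - K) * r := by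
        gcongr
        exact (hf.dist_le_mul v (mem_closedBall.mpr hv) x (mem_closedBall_self hr)).trans
          (by gcongr)
    _ = r := by ring

section SimplifiedNewton

variable {E G : Type*} [NormedAddCommGroup E] [NormedSpace ℝ E] [NormedAddCommGroup G]
  [NormedSpace ℝ G]

theorem ContinuousLinearMap.norm_apply_le_of_le_div (T : G →L[ℝ] E) {x : G} {r : ℝ}
    (hr : 0 ≤ r) (hx : ‖x‖ ≤ r / ‖T‖) : ‖T x‖ ≤ r := by
  rcases (norm_nonneg T).eq_or_lt with hT | hT
  · simpa [norm_eq_zero.mp hT.symm] using hr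
  · calc ‖T x‖ ≤ ‖T‖ * (r / ‖T‖) := T.le_opNorm_of_le hx
      _ = r := mul_div_cancel₀ r hT.ne'

def simplifiedNewtonMap (T : G →L[ℝ] E) (f : E → G) (v : E) : E := v - T (f v)

theorem isFixedPt_simplifiedNewtonMap_iff {T : G →L[ℝ] E} (hT : Injective T) {f : E → G}
    {v : E} : IsFixedPt (simplifiedNewtonMap T f) v ↔ f v = 0 := by
  rw [IsFixedPt, simplifiedNewtonMap, sub_eq_self, map_eq_zero_iff T hT]

theorem Convex.lipschitzOnWith_simplifiedNewtonMap {s : Set E} (hs : Convex ℝ s)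
    (T : G →L[ℝ] E) {f : E → G} {D : E → E →L[ℝ] G} (hf : ∀ v ∈ s, HasFDerivAt f (D v) v)
    {K : ℝ≥0} (hD : ∀ v ∈ s, ‖ContinuousLinearMap.id ℝ E - T.comp (D v)‖ ≤ K) :
    LipschitzOnWith K (simplifiedNewtonMap T f) s :=
  hs.lipschitzOnWith_of_nnnorm_hasFDerivWithin_le
    (fun v hv ↦ ((hasFDerivAt_id v).sub (T.hasFDerivAt.comp v (hf v hv))).hasFDerivWithinAt)
    (fun v hv ↦ hD v hv)

end SimplifiedNewton

theorem stmt2_general (j m : ℕ)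
    (v₀ : EuclideanSpace ℝ (Fin j)) (y₀ : EuclideanSpace ℝ (Fin m))
    (r₁ r₂ : ℝ) (hr₁ : 0 < r₁) (hr₂ : 0 < r₂)
    (F : EuclideanSpace ℝ (Fin j) × EuclideanSpace ℝ (Fin m) → EuclideanSpace ℝ (Fin j))
    (Dv : EuclideanSpace ℝ (Fin j) × EuclideanSpace ℝ (Fin m) →
      (EuclideanSpace ℝ (Fin j) →L[ℝ] EuclideanSpace ℝ (Fin j)))
    (hFcont : ContinuousOn F (closedBall v₀ r₁ ×ˢ closedBall y₀ r₂))
    (hDv : ∀ p ∈ closedBall v₀ r₁ ×ˢ closedBall y₀ r₂,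
      HasFDerivAt (fun v => F (v, p.2)) (Dv p) p.1)
    (hF0 : F (v₀, y₀) = 0)
    (T₀ : EuclideanSpace ℝ (Fin j) →L[ℝ] EuclideanSpace ℝ (Fin j))
    (hT₀r : (Dv (v₀, y₀)).comp T₀ = ContinuousLinearMap.id ℝ (EuclideanSpace ℝ (Fin j)))
    (hsmall : ∀ y ∈ closedBall y₀ r₂, ‖F (v₀, y)‖ ≤ r₁ / (2 * ‖T₀‖))
    (hhalf : ∀ p ∈ closedBall v₀ r₁ ×ˢ closedBall y₀ r₂,
      ‖ContinuousLinearMap.id ℝ (EuclideanSpace ℝ (Fin j)) - T₀.comp (Dv p)‖ ≤ 1 / 2) :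
    ∃ q : EuclideanSpace ℝ (Fin m) → EuclideanSpace ℝ (Fin j),
      (ContinuousOn q (closedBall y₀ r₂) ∧
        Set.MapsTo q (closedBall y₀ r₂) (closedBall v₀ r₁) ∧
        q y₀ = v₀ ∧
        ∀ v ∈ closedBall v₀ r₁, ∀ y ∈ closedBall y₀ r₂, (F (v, y) = 0 ↔ v = q y)) ∧
      ∀ q' : EuclideanSpace ℝ (Fin m) → EuclideanSpace ℝ (Fin j),
        (ContinuousOn q' (closedBall y₀ r₂) ∧
          Set.MapsTo q' (closedBall y₀ r₂) (closedBall v₀ r₁) ∧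
          q' y₀ = v₀ ∧
          ∀ v ∈ closedBall v₀ r₁, ∀ y ∈ closedBall y₀ r₂, (F (v, y) = 0 ↔ v = q' y)) →
        Set.EqOn q' q (closedBall y₀ r₂) := by
  set Φ := fun y ↦ simplifiedNewtonMap T₀ (fun v ↦ F (v, y))
  have hT₀ : Injective T₀ := LeftInverse.injective (g := Dv (v₀, y₀)) fun x ↦ by
    simpa using DFunLike.congr_fun hT₀r x
  have hlip : ∀ y ∈ closedBall y₀ r₂, LipschitzOnWith (1 / 2) (Φ y) (closedBall v₀ r₁) :=
    fun y hy ↦ (convex_closedBall v₀ r₁).lipschitzOnWith_simplifiedNewtonMap T₀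
      (fun v hv ↦ hDv (v, y) ⟨hv, hy⟩) (fun v hv ↦ by simpa using hhalf (v, y) ⟨hv, hy⟩)
  have hmaps : ∀ y ∈ closedBall y₀ r₂, MapsTo (Φ y) (closedBall v₀ r₁) (closedBall v₀ r₁) := by
    refine fun y hy ↦ (hlip y hy).mapsTo_closedBall ?_
    calc dist (Φ y v₀) v₀ = ‖T₀ (F (v₀, y))‖ := by
          simp only [Φ, simplifiedNewtonMap, dist_eq_norm, sub_sub_cancel_left, norm_neg]
      _ ≤ r₁ / 2 := T₀.norm_apply_le_of_le_div (by positivity)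
          (by rw [div_div]; exact hsmall y hy)
      _ = (1 - (1 / 2 : ℝ≥0)) * r₁ := by norm_num [div_eq_inv_mul]
  have hcont : ∀ v ∈ closedBall v₀ r₁, ContinuousOn (fun y ↦ Φ y v) (closedBall y₀ r₂) :=
    fun v hv ↦ continuousOn_const.sub (T₀.continuous.comp_continuousOn
      (hFcont.comp (continuousOn_const.prodMk continuousOn_id) fun y hy ↦ ⟨hv, hy⟩))
  obtain ⟨q, hqmaps, hqcont, hq⟩ := exists_continuousOn_isFixedPt_iff Φ (by norm_num)
    isClosed_closedBall.isComplete (nonempty_closedBall.mpr hr₁.le) hmaps hlip hcont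
  have hzero : ∀ v ∈ closedBall v₀ r₁, ∀ y ∈ closedBall y₀ r₂, F (v, y) = 0 ↔ v = q y :=
    fun v hv y hy ↦ (isFixedPt_simplifiedNewtonMap_iff hT₀).symm.trans (hq y hy v hv)
  refine ⟨q, ⟨hqcont, hqmaps, ((hzero _ (mem_closedBall_self hr₁.le) _
    (mem_closedBall_self hr₂.le)).mp hF0).symm, hzero⟩, ?_⟩
  rintro q' ⟨-, hq'maps, -, hq'zero⟩ y hy
  exact (hzero _ (hq'maps hy) y hy).mp ((hq'zero _ (hq'maps hy) y hy).mpr rfl)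

/-- Quantitative implicit function theorem. -/
theorem stmt2 (j m : ℕ) (hj : 1 ≤ j) (hm : 1 ≤ m)
    (v₀ : EuclideanSpace ℝ (Fin j)) (y₀ : EuclideanSpace ℝ (Fin m))
    (r₁ r₂ : ℝ) (hr₁ : 0 < r₁) (hr₂ : 0 < r₂)
    (O : Set (EuclideanSpace ℝ (Fin j) × EuclideanSpace ℝ (Fin m))) (hO : IsOpen O)
    (hsub : closedBall v₀ r₁ ×ˢ closedBall y₀ r₂ ⊆ O)
    (F : EuclideanSpace ℝ (Fin j) × EuclideanSpace ℝ (Fin m) → EuclideanSpace ℝ (Fin j))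
    (Dv : EuclideanSpace ℝ (Fin j) × EuclideanSpace ℝ (Fin m) →
      (EuclideanSpace ℝ (Fin j) →L[ℝ] EuclideanSpace ℝ (Fin j)))
    (hFcont : ContinuousOn F (closedBall v₀ r₁ ×ˢ closedBall y₀ r₂))
    (hDv : ∀ p ∈ closedBall v₀ r₁ ×ˢ closedBall y₀ r₂,
      HasFDerivAt (fun v => F (v, p.2)) (Dv p) p.1)
    (hDvcont : ContinuousOn Dv (closedBall v₀ r₁ ×ˢ closedBall y₀ r₂))
    (hF0 : F (v₀, y₀) = 0)
    (T₀ : EuclideanSpace ℝ (Fin j) →L[ℝ] EuclideanSpace ℝ (Fin j))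
    (hT₀l : T₀.comp (Dv (v₀, y₀)) = ContinuousLinearMap.id ℝ (EuclideanSpace ℝ (Fin j)))
    (hT₀r : (Dv (v₀, y₀)).comp T₀ = ContinuousLinearMap.id ℝ (EuclideanSpace ℝ (Fin j)))
    (hsmall : ∀ y ∈ closedBall y₀ r₂, ‖F (v₀, y)‖ ≤ r₁ / (2 * ‖T₀‖))
    (hhalf : ∀ p ∈ closedBall v₀ r₁ ×ˢ closedBall y₀ r₂,
      ‖ContinuousLinearMap.id ℝ (EuclideanSpace ℝ (Fin j)) - T₀.comp (Dv p)‖ ≤ 1 / 2) :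
    ∃ q : EuclideanSpace ℝ (Fin m) → EuclideanSpace ℝ (Fin j),
      (ContinuousOn q (closedBall y₀ r₂) ∧
        Set.MapsTo q (closedBall y₀ r₂) (closedBall v₀ r₁) ∧
        q y₀ = v₀ ∧
        ∀ v ∈ closedBall v₀ r₁, ∀ y ∈ closedBall y₀ r₂, (F (v, y) = 0 ↔ v = q y)) ∧
      ∀ q' : EuclideanSpace ℝ (Fin m) → EuclideanSpace ℝ (Fin j),
        (ContinuousOn q' (closedBall y₀ r₂) ∧
          Set.MapsTo q' (closedBall y₀ r₂) (closedBall v₀ r₁) ∧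
          q' y₀ = v₀ ∧
          ∀ v ∈ closedBall v₀ r₁, ∀ y ∈ closedBall y₀ r₂, (F (v, y) = 0 ↔ v = q' y)) →
        Set.EqOn q' q (closedBall y₀ r₂) :=
  stmt2_general j m v₀ y₀ r₁ r₂ hr₁ hr₂ F Dv hFcont hDv hF0 T₀ hT₀r hsmall hhalf
end

section
/- (Lipschitz regularity of the dynamic-programming value function.) Fix N ≥ 1 and, for k = 0,…,N−1, sets X_k ⊆ ℝᵐ (and X_N ⊆ ℝᵐ) and ℳ_k ⊆ ℝⁿ. Assume: (1) for each k, a map U_k assigning to every x ∈ X_k a nonempty compact subset U_k(x) ⊆ ℳ_k, which is Lipschitz with constant L_k with respect to the Hausdorff distance d_H; (2) probability spaces (Y_k, ℰ_k, p_k) and maps f_k : X_k × ℳ_k × Y_k → X_{k+1} such that y ↦ f_k(x,u,y) is measurable and y ↦ |f_k(x,u,y)| is p_k-integrable for every (x,u), and such that for p_k-almost every y, |f_k(x,u,y) − f_k(x',u',y)| ≤ V_k(y)·|(x − x', u − u')| for all x,x' ∈ X_k, u,u' ∈ ℳ_k, where V_k ≥ 0 is p_k-integrable. Let g : X_N → ℝ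 be Lipschitz continuous and define J_N = g and, for k = N−1,…,0, J_k(x) = sup_{u ∈ U_k(x)} ∫_{Y_k} J_{k+1}(f_k(x,u,y)) dp_k(y) for x ∈ X_k. Then every J_k is Lipschitz continuous on X_k and Lip(J_k) ≤ Lip(J_{k+1}) · (∫_{Y_k} V_k dp_k) · (1 + L_k) for k = 0,…,N−1, with Lip(J_N) = Lip(g). -/
open MeasureTheory Metric

/-- Lipschitz regularity of the dynamic-programming value function:
`Lip(J_k) ≤ Lip(J_{k+1}) · (∫ V_k dp_k) · (1 + L_k)`, `Lip(J_N) = Lip(g)`; unfolded, every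
`J_k` is Lipschitz with constant `Lip(g) · ∏_{i=k}^{N-1} (∫ V_i dp_i)(1 + L_i)`. -/
theorem stmt6 {m n : ℕ} (N : ℕ) (hN : 1 ≤ N)
    (X : ℕ → Set (EuclideanSpace ℝ (Fin m)))
    (Mset : ℕ → Set (EuclideanSpace ℝ (Fin n)))
    (U : ℕ → EuclideanSpace ℝ (Fin m) → Set (EuclideanSpace ℝ (Fin n)))
    (L : ℕ → ℝ) (hL : ∀ k, 0 ≤ L k)
    (hU : ∀ k < N, ∀ x ∈ X k, (U k x).Nonempty ∧ IsCompact (U k x) ∧ U k x ⊆ Mset k)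
    (hULip : ∀ k < N, ∀ x ∈ X k, ∀ x' ∈ X k,
      hausdorffDist (U k x) (U k x') ≤ L k * dist x x')
    (Y : ℕ → Type*) [∀ k, MeasurableSpace (Y k)]
    (p : ∀ k, Measure (Y k)) [∀ k, IsProbabilityMeasure (p k)]
    (f : ∀ k, EuclideanSpace ℝ (Fin m) → EuclideanSpace ℝ (Fin n) → Y k →
      EuclideanSpace ℝ (Fin m))
    (hfmaps : ∀ k < N, ∀ x ∈ X k, ∀ u ∈ Mset k, ∀ y, f k x u y ∈ X (k + 1))
    (hfmeas : ∀ k < N, ∀ x ∈ X k, ∀ u ∈ Mset k, Measurable (f k x u))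
    (hfint : ∀ k < N, ∀ x ∈ X k, ∀ u ∈ Mset k, Integrable (fun y => ‖f k x u y‖) (p k))
    (V : ∀ k, Y k → ℝ) (hV0 : ∀ k y, 0 ≤ V k y)
    (hVint : ∀ k < N, Integrable (V k) (p k))
    (hflip : ∀ k < N, ∀ᵐ y ∂ p k, ∀ x ∈ X k, ∀ x' ∈ X k, ∀ u ∈ Mset k, ∀ u' ∈ Mset k,
      ‖f k x u y - f k x' u' y‖ ≤ V k y * Real.sqrt (dist x x' ^ 2 + dist u u' ^ 2))
    (g : EuclideanSpace ℝ (Fin m) → ℝ) (Lg : ℝ) (hLg : 0 ≤ Lg)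
    (hg : ∀ x ∈ X N, ∀ x' ∈ X N, |g x - g x'| ≤ Lg * dist x x')
    (J : ℕ → EuclideanSpace ℝ (Fin m) → ℝ)
    (hJN : ∀ x ∈ X N, J N x = g x)
    (hJ : ∀ k < N, ∀ x ∈ X k,
      J k x = sSup ((fun u => ∫ y, J (k + 1) (f k x u y) ∂ p k) '' U k x)) :
    ∀ k ≤ N, ∀ x ∈ X k, ∀ x' ∈ X k,
      |J k x - J k x'| ≤
        (Lg * ∏ i ∈ Finset.Ico k N, (∫ y, V i y ∂ p i) * (1 + L i)) * dist x x' := by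
  -- prove the claim by downward induction
  suffices key : ∀ d k : ℕ, N = k + d → ∀ x ∈ X k, ∀ x' ∈ X k,
      |J k x - J k x'| ≤
        (Lg * ∏ i ∈ Finset.Ico k N, (∫ y, V i y ∂ p i) * (1 + L i)) * dist x x' by
    intro k hk
    exact key (N - k) k (by omega)
  intro d
  induction d with
  | zero =>
    intro k hkN x hx x' hx'
    subst hkN
    simp only [Nat.add_zero, Finset.Ico_self, Finset.prod_empty, mul_one]
    rw [hJN x hx, hJN x' hx']
    exact hg x hx x' hx'
  | succ d ih =>
    intro k hkN x hx x' hx'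
    have hkN' : k < N := by omega
    have hIH := ih (k + 1) (by omega)
    set C' : ℝ := Lg * ∏ i ∈ Finset.Ico (k + 1) N, (∫ y, V i y ∂ p i) * (1 + L i) with hC'def
    have hC' : 0 ≤ C' := by
      refine mul_nonneg hLg (Finset.prod_nonneg fun i _ => mul_nonneg ?_ ?_)
      · exact integral_nonneg (hV0 i)
      · linarith [hL i]
    -- extend J (k+1) to a globally Lipschitz function
    have hlip : LipschitzOnWith C'.toNNReal (J (k + 1)) (X (k + 1)) := by
      rw [lipschitzOnWith_iff_dist_le_mul]
      intro a ha b hb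
      rw [Real.dist_eq, Real.coe_toNNReal _ hC']
      exact hIH a ha b hb
    obtain ⟨h, hhlip, hhEq⟩ := hlip.extend_real
    have hhdist : ∀ a b, |h a - h b| ≤ C' * dist a b := by
      intro a b
      have := hhlip.dist_le_mul a b
      rwa [Real.dist_eq, Real.coe_toNNReal _ hC'] at this
    set IV : ℝ := ∫ y, V k y ∂ p k with hIVdef
    have hIV : 0 ≤ IV := integral_nonneg (hV0 k)
    -- integrability of h ∘ f
    have hint : ∀ z ∈ X k, ∀ u ∈ Mset k, Integrable (fun y => h (f k z u y)) (p k) := by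
      intro z hz u hu
      refine Integrable.mono' (g := fun y => |h 0| + C' * ‖f k z u y‖)
        ((integrable_const _).add ((hfint k hkN' z hz u hu).const_mul C'))
        ((hhlip.continuous.measurable.comp (hfmeas k hkN' z hz u hu)).aestronglyMeasurable) ?_
      filter_upwards with y
      have h1 := hhdist (f k z u y) 0
      rw [Real.norm_eq_abs]
      have h2 : |h (f k z u y)| ≤ |h (f k z u y) - h 0| + |h 0| := by
        have := abs_sub_abs_le_abs_sub (h (f k z u y)) (h 0); linarith [abs_nonneg (h 0)]
      have h3 : dist (f k z u y) 0 = ‖f k z u y‖ := by simp [dist_eq_norm]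
      rw [h3] at h1
      linarith
    -- key difference estimate
    have hdiff : ∀ z ∈ X k, ∀ z' ∈ X k, ∀ u ∈ Mset k, ∀ u' ∈ Mset k,
        (∫ y, h (f k z u y) ∂ p k) - (∫ y, h (f k z' u' y) ∂ p k) ≤
          C' * IV * (dist z z' + dist u u') := by
      intro z hz z' hz' u hu u' hu'
      rw [← integral_sub (hint z hz u hu) (hint z' hz' u' hu')]
      have hs : Real.sqrt (dist z z' ^ 2 + dist u u' ^ 2) ≤ dist z z' + dist u u' := by
        rw [show dist z z' + dist u u' = Real.sqrt ((dist z z' + dist u u') ^ 2) from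
          (Real.sqrt_sq (by positivity)).symm]
        have d1 : 0 ≤ dist z z' := dist_nonneg
        have d2 : 0 ≤ dist u u' := dist_nonneg
        exact Real.sqrt_le_sqrt (by nlinarith [mul_nonneg d1 d2])
      calc (∫ y, (h (f k z u y) - h (f k z' u' y)) ∂ p k)
          ≤ ∫ y, (C' * (dist z z' + dist u u')) * V k y ∂ p k := by
            refine integral_mono_ae ((hint z hz u hu).sub (hint z' hz' u' hu'))
              ((hVint k hkN').const_mul _) ?_
            filter_upwards [hflip k hkN'] with y hy
            have h1 := hhdist (f k z u y) (f k z' u' y)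
            have h2 := hy z hz z' hz' u hu u' hu'
            have h3 : dist (f k z u y) (f k z' u' y) = ‖f k z u y - f k z' u' y‖ :=
              dist_eq_norm _ _
            have h4 : h (f k z u y) - h (f k z' u' y) ≤ |h (f k z u y) - h (f k z' u' y)| :=
              le_abs_self _
            have h5 : V k y * Real.sqrt (dist z z' ^ 2 + dist u u' ^ 2) ≤
                V k y * (dist z z' + dist u u') := by
              exact mul_le_mul_of_nonneg_left hs (hV0 k y)
            nlinarith [hV0 k y]
        _ = C' * IV * (dist z z' + dist u u') := by
            rw [integral_const_mul]; ring
    -- rewrite J k as sSup of images of I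
    set I : EuclideanSpace ℝ (Fin m) → EuclideanSpace ℝ (Fin n) → ℝ :=
      fun z u => ∫ y, h (f k z u y) ∂ p k with hIdef
    have hJk : ∀ z ∈ X k, J k z = sSup (I z '' U k z) := by
      intro z hz
      rw [hJ k hkN' z hz]
      congr 1
      refine Set.image_congr fun u hu => ?_
      exact integral_congr_ae (Filter.Eventually.of_forall fun y =>
        hhEq (hfmaps k hkN' z hz u ((hU k hkN' z hz).2.2 hu) y))
    -- each image is nonempty and bounded above
    have hbdd : ∀ z ∈ X k, BddAbove (I z '' U k z) := by
      intro z hz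
      refine ((hU k hkN' z hz).2.1.image_of_continuousOn ?_).bddAbove
      have : LipschitzOnWith (C' * IV).toNNReal (I z) (Mset k) := by
        rw [lipschitzOnWith_iff_dist_le_mul]
        intro a ha b hb
        rw [Real.dist_eq, Real.coe_toNNReal _ (mul_nonneg hC' hIV)]
        have h1 := hdiff z hz z hz a ha b hb
        have h2 := hdiff z hz z hz b hb a ha
        rw [dist_self] at h1 h2
        rw [abs_sub_le_iff]
        constructor
        · calc I z a - I z b ≤ C' * IV * (0 + dist a b) := h1
            _ = C' * IV * dist a b := by ring
        · calc I z b - I z a ≤ C' * IV * (0 + dist b a) := h2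
            _ = C' * IV * dist a b := by rw [dist_comm a b]; ring
      exact (this.mono (hU k hkN' z hz).2.2).continuousOn
    have hne : ∀ z ∈ X k, (I z '' U k z).Nonempty := fun z hz =>
      ((hU k hkN' z hz).1).image _
    -- one-sided sSup comparison
    have hside : ∀ z ∈ X k, ∀ z' ∈ X k,
        sSup (I z '' U k z) ≤ sSup (I z' '' U k z') + C' * IV * (1 + L k) * dist z z' := by
      intro z hz z' hz'
      refine csSup_le (hne z hz) ?_
      rintro a ⟨u, hu, rfl⟩
      have hedist : EMetric.hausdorffEdist (U k z) (U k z') ≠ ⊤ :=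
        hausdorffEdist_ne_top_of_nonempty_of_bounded (hU k hkN' z hz).1 (hU k hkN' z' hz').1
          (hU k hkN' z hz).2.1.isBounded (hU k hkN' z' hz').2.1.isBounded
      obtain ⟨u', hu', huu'⟩ :=
        (hU k hkN' z' hz').2.1.exists_infDist_eq_dist (hU k hkN' z' hz').1 u
      have hdu : dist u u' ≤ L k * dist z z' := by
        rw [← huu']
        exact le_trans (infDist_le_hausdorffDist_of_mem hu hedist) (hULip k hkN' z hz z' hz')
      have h1 := hdiff z hz z' hz' u ((hU k hkN' z hz).2.2 hu) u' ((hU k hkN' z' hz').2.2 hu')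
      have h2 : I z' u' ≤ sSup (I z' '' U k z') :=
        le_csSup (hbdd z' hz') ⟨u', hu', rfl⟩
      have d1 : 0 ≤ dist z z' := dist_nonneg
      nlinarith [mul_nonneg hC' hIV]
    -- conclude
    have hfact : Lg * ∏ i ∈ Finset.Ico k N, (∫ y, V i y ∂ p i) * (1 + L i) =
        C' * IV * (1 + L k) := by
      rw [hC'def, Finset.prod_eq_prod_Ico_succ_bot hkN']
      rw [hIVdef]; ring
    rw [hfact, hJk x hx, hJk x' hx', abs_sub_le_iff]
    constructor
    · have := hside x hx x' hx'; linarith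
    · have := hside x' hx' x hx; rw [dist_comm x' x] at this; linarith
end

section
/- Let 1 ≤ d < m and let M ⊆ ℝᵐ be a nonempty, compact, connected set which is a d-dimensional C¹ submanifold of ℝᵐ, in the sense that for every x ∈ M there exist an open set U ⊆ ℝᵐ containing x and a C¹ map g : U → ℝ^{m−d} whose Fréchet derivative is surjective at every point of U and such that M ∩ U = g⁻¹({0}). Then M satisfies property (CON): there exists a constant a > 0 such that any two points x₁, x₂ ∈ M can be joined by a Lipschitz path γ : [0,1] → M with γ(0) = x₁, γ(1) = x₂ whose length (total variation) is at most a·|x₁ − x₂|. -/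
/-!
Near a point `x ∈ M`, the implicit function theorem parametrizes `M` by a map `φ` on a ball of
`ker g'(x)` with `‖φ y - φ z - (y - z)‖ ≤ ‖y - z‖ / 2`, so the image of a segment is a Lipschitz
path of length at most `3 |p - q|`. A Lebesgue number makes this uniform for `|p - q| < δ`,
connectedness chains such paths together, and compactness of `M × M` bounds their lengths by
some `B`; points with `|p - q| ≥ δ` are then joined by a path of length `B ≤ (B / δ) |p - q|`.
-/

open Set Metric Filter Topology
open scoped NNReal

section PathLength

variable {E : Type*} [PseudoMetricSpace E]

def LipschitzJoinedIn (M : Set E) (L : ℝ≥0) (p q : E) : Prop :=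
  ∃ γ : ℝ → E, (∃ K : ℝ≥0, LipschitzOnWith K γ (Icc 0 1)) ∧
    γ 0 = p ∧ γ 1 = q ∧ MapsTo γ (Icc 0 1) M ∧ eVariationOn γ (Icc 0 1) ≤ L

theorem LipschitzJoinedIn.mono {M : Set E} {L L' : ℝ≥0} {p q : E}
    (h : LipschitzJoinedIn M L p q) (hL : L ≤ L') : LipschitzJoinedIn M L' p q := by
  obtain ⟨γ, hγ, h0, h1, hM, hv⟩ := h
  exact ⟨γ, hγ, h0, h1, hM, hv.trans (by exact_mod_cast hL)⟩

theorem LipschitzOnWith.congr {α : Type*} [PseudoEMetricSpace α] {f g : α → E} {s : Set α}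
    {K : ℝ≥0} (hf : LipschitzOnWith K f s) (hfg : EqOn f g s) : LipschitzOnWith K g s :=
  fun x hx y hy => by simpa only [hfg hx, hfg hy] using hf hx hy

theorem LipschitzOnWith.eVariationOn_Icc_le {γ : ℝ → E} {K : ℝ≥0} {a b : ℝ}
    (hγ : LipschitzOnWith K γ (Icc a b)) :
    eVariationOn γ (Icc a b) ≤ K * ENNReal.ofReal (b - a) := by
  simpa using hγ.comp_eVariationOn_le (mapsTo_id (Icc a b))

theorem LipschitzOnWith.lipschitzJoinedIn {M : Set E} {γ : ℝ → E} {K : ℝ≥0}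
    (hγ : LipschitzOnWith K γ (Icc 0 1)) (hM : MapsTo γ (Icc 0 1) M) :
    LipschitzJoinedIn M K (γ 0) (γ 1) :=
  ⟨γ, ⟨K, hγ⟩, rfl, rfl, hM, by simpa using hγ.eVariationOn_Icc_le⟩

theorem LipschitzOnWith.Icc_union_Icc {f : ℝ → E} {K : ℝ≥0} {a b c : ℝ}
    (h₁ : LipschitzOnWith K f (Icc a b)) (h₂ : LipschitzOnWith K f (Icc b c)) :
    LipschitzOnWith K f (Icc a b ∪ Icc b c) := by
  have across : ∀ s ∈ Icc a b, ∀ t ∈ Icc b c, dist (f s) (f t) ≤ K * dist s t := by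
    intro s hs t ht
    calc dist (f s) (f t) ≤ dist (f s) (f b) + dist (f b) (f t) := dist_triangle _ _ _
      _ ≤ K * dist s b + K * dist b t := by
          gcongr
          · exact h₁.dist_le_mul s hs b ⟨hs.1.trans hs.2, le_rfl⟩
          · exact h₂.dist_le_mul b ⟨le_rfl, ht.1.trans ht.2⟩ t ht
      _ = K * dist s t := by
          simp only [Real.dist_eq, abs_of_nonpos (sub_nonpos.2 hs.2),
            abs_of_nonpos (sub_nonpos.2 ht.1), abs_of_nonpos (sub_nonpos.2 (hs.2.trans ht.1))]
          ring
  refine LipschitzOnWith.of_dist_le_mul fun s hs t ht => ?_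
  rcases hs with hs | hs <;> rcases ht with ht | ht
  · exact h₁.dist_le_mul s hs t ht
  · exact across s hs t ht
  · rw [dist_comm, dist_comm s]; exact across t ht s hs
  · exact h₂.dist_le_mul s hs t ht

theorem LipschitzJoinedIn.trans {M : Set E} {L₁ L₂ : ℝ≥0} {p q r : E}
    (h₁ : LipschitzJoinedIn M L₁ p q) (h₂ : LipschitzJoinedIn M L₂ q r) :
    LipschitzJoinedIn M (L₁ + L₂) p r := by
  obtain ⟨γ₁, ⟨K₁, hK₁⟩, rfl, rfl, hM₁, hv₁⟩ := h₁
  obtain ⟨γ₂, ⟨K₂, hK₂⟩, hq, rfl, hM₂, hv₂⟩ := h₂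
  set γ : ℝ → E := fun t => if t ≤ 2⁻¹ then γ₁ (2 * t) else γ₂ (2 * t - 1)
  have hI₁ : (fun t : ℝ => 2 * t) '' Icc 0 2⁻¹ = Icc 0 1 := by
    simpa using image_affine_Icc' (two_pos (α := ℝ)) 0 0 2⁻¹
  have hI₂ : (fun t : ℝ => 2 * t - 1) '' Icc 2⁻¹ 1 = Icc 0 1 := by
    have := image_affine_Icc' (two_pos (α := ℝ)) (-1) 2⁻¹ 1
    norm_num [← sub_eq_add_neg] at this ⊢
    exact this
  have he₁ : EqOn γ (γ₁ ∘ fun t => 2 * t) (Icc 0 2⁻¹) := fun t ht => if_pos ht.2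
  have he₂ : EqOn γ (γ₂ ∘ fun t => 2 * t - 1) (Icc 2⁻¹ 1) := by
    intro t ht
    rcases ht.1.eq_or_lt with rfl | ht'
    · simp [γ, hq]
    · exact if_neg (not_le.2 ht')
  have hmono₁ : Monotone fun t : ℝ => 2 * t := fun s t hst => by dsimp; linarith
  have hmono₂ : Monotone fun t : ℝ => 2 * t - 1 := fun s t hst => by dsimp; linarith
  have hlip₁ : LipschitzWith 2 fun t : ℝ => 2 * t :=
    LipschitzWith.of_dist_le_mul fun s t => by
      simp [Real.dist_eq, ← mul_sub, abs_mul]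
  have hlip₂ : LipschitzWith 2 fun t : ℝ => 2 * t - 1 :=
    LipschitzWith.of_dist_le_mul fun s t => by
      simp [Real.dist_eq, ← mul_sub, abs_mul]
  have hmaps₁ : MapsTo (fun t : ℝ => 2 * t) (Icc 0 2⁻¹) (Icc 0 1) := hI₁ ▸ mapsTo_image _ _
  have hmaps₂ : MapsTo (fun t : ℝ => 2 * t - 1) (Icc 2⁻¹ 1) (Icc 0 1) := hI₂ ▸ mapsTo_image _ _
  have hsplit : Icc (0 : ℝ) 2⁻¹ ∪ Icc 2⁻¹ 1 = Icc 0 1 :=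
    Icc_union_Icc_eq_Icc (by norm_num) (by norm_num)
  have hγ₁ : LipschitzOnWith ((K₁ + K₂) * 2) γ (Icc 0 2⁻¹) :=
    ((hK₁.comp hlip₁.lipschitzOnWith hmaps₁).congr he₁.symm).weaken
      (by gcongr; exact le_self_add)
  have hγ₂ : LipschitzOnWith ((K₁ + K₂) * 2) γ (Icc 2⁻¹ 1) :=
    ((hK₂.comp hlip₂.lipschitzOnWith hmaps₂).congr he₂.symm).weaken
      (by gcongr; exact le_add_self)
  refine ⟨γ, ⟨_, hsplit ▸ hγ₁.Icc_union_Icc hγ₂⟩, by simp [γ], by norm_num [γ], ?_, ?_⟩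
  · rw [← hsplit]
    exact ((hM₁.comp hmaps₁).congr he₁.symm).union ((hM₂.comp hmaps₂).congr he₂.symm)
  · rw [← hsplit, eVariationOn.union _ (isGreatest_Icc (by norm_num)) (isLeast_Icc (by norm_num)),
      ENNReal.coe_add, eVariationOn.eq_of_eqOn he₁, eVariationOn.eq_of_eqOn he₂,
      eVariationOn.comp_eq_of_monotoneOn _ _ (hmono₁.monotoneOn _),
      eVariationOn.comp_eq_of_monotoneOn _ _ (hmono₂.monotoneOn _), hI₁, hI₂]
    exact add_le_add hv₁ hv₂

theorem LipschitzOnWith.lipschitzJoinedIn_of_convex {F : Type*} [NormedAddCommGroup F]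
    [NormedSpace ℝ F] {M : Set E} {f : F → E} {s : Set F} {K : ℝ≥0}
    (hf : LipschitzOnWith K f s) (hs : Convex ℝ s) (hfs : MapsTo f s M) {u v : F}
    (hu : u ∈ s) (hv : v ∈ s) : LipschitzJoinedIn M (K * nndist u v) (f u) (f v) := by
  have hseg : MapsTo (AffineMap.lineMap u v) (Icc (0 : ℝ) 1) s := hs.mapsTo_lineMap hu hv
  simpa using (hf.comp (lipschitzWith_lineMap u v).lipschitzOnWith hseg).lipschitzJoinedIn
    (hfs.comp hseg)

theorem ApproximatesLinearOn.lipschitzJoinedIn {F G : Type*} [NormedAddCommGroup F]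
    [NormedSpace ℝ F] [NormedAddCommGroup G] [NormedSpace ℝ G] {M : Set G} {f : F → G}
    {f' : F →L[ℝ] G} {s : Set F} {c : ℝ≥0} (hf : ApproximatesLinearOn f f' s c)
    (hf' : ∀ v, ‖f' v‖ = ‖v‖) (hc : c < 1) (hs : Convex ℝ s) (hfs : MapsTo f s M) {u v : F}
    (hu : u ∈ s) (hv : v ∈ s) :
    LipschitzJoinedIn M ((1 + c) * (1 - c)⁻¹ * nndist (f u) (f v)) (f u) (f v) := by
  have hlip : LipschitzOnWith (1 + c) f s := by
    refine LipschitzOnWith.of_dist_le_mul fun y hy z hz => ?_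
    have := hf y hy z hz
    rw [dist_eq_norm, dist_eq_norm]
    calc ‖f y - f z‖ ≤ ‖f' (y - z)‖ + ‖f y - f z - f' (y - z)‖ := norm_le_insert' _ _
      _ ≤ (1 + c) * ‖y - z‖ := by rw [hf']; linarith
  have hanti : (1 - c) * nndist u v ≤ nndist (f u) (f v) := by
    rw [← NNReal.coe_le_coe]
    have := hf u hu v hv
    push_cast [NNReal.coe_sub hc.le, dist_eq_norm]
    calc (1 - c) * ‖u - v‖ = ‖f' (u - v)‖ - c * ‖u - v‖ := by rw [hf']; ring
      _ ≤ ‖f u - f v‖ := by linarith [norm_le_insert (f u - f v) (f' (u - v))]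
  refine (hlip.lipschitzJoinedIn_of_convex hs hfs hu hv).mono ?_
  rw [mul_assoc]
  gcongr
  rwa [le_inv_mul_iff₀ (tsub_pos_of_lt hc)]

def LocallyLipschitzJoined (M : Set E) (C : ℝ≥0) : Prop :=
  ∀ x ∈ M, ∃ r > 0, ∀ p ∈ M ∩ ball x r, ∀ q ∈ M ∩ ball x r,
    LipschitzJoinedIn M (C * nndist p q) p q

variable {M : Set E} {C : ℝ≥0}

theorem IsPreconnected.exists_lipschitzJoinedIn (hconn : IsPreconnected M)
    (hloc : LocallyLipschitzJoined M C) {p q : E} (hp : p ∈ M) (hq : q ∈ M) :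
    ∃ L, LipschitzJoinedIn M L p q := by
  refine hconn.induction₂' (fun p q => ∃ L, LipschitzJoinedIn M L p q) (fun x hx => ?_)
    (fun _ _ _ _ _ _ ⟨_, h₁⟩ ⟨_, h₂⟩ => ⟨_, h₁.trans h₂⟩) hp hq
  obtain ⟨r, hr, h⟩ := hloc x hx
  have hx' : x ∈ M ∩ ball x r := ⟨hx, mem_ball_self hr⟩
  filter_upwards [inter_mem_nhdsWithin M (ball_mem_nhds x hr)] with y hy
  exact ⟨⟨_, h x hx' y hy⟩, ⟨_, h y hy x hx'⟩⟩

theorem IsCompact.exists_lipschitzJoinedIn_le (hcpt : IsCompact M)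
    (hloc : LocallyLipschitzJoined M C)
    (hjoin : ∀ p ∈ M, ∀ q ∈ M, ∃ L, LipschitzJoinedIn M L p q) :
    ∃ B, ∀ p ∈ M, ∀ q ∈ M, LipschitzJoinedIn M B p q := by
  suffices ∃ B, ∀ z ∈ M ×ˢ M, LipschitzJoinedIn M B z.1 z.2 from
    this.imp fun B hB p hp q hq => hB (p, q) ⟨hp, hq⟩
  refine (hcpt.prod hcpt).induction_on ⟨0, by simp⟩
    (fun _ _ hst ⟨B, hB⟩ => ⟨B, fun z hz => hB z (hst hz)⟩)
    (fun _ _ ⟨B₁, h₁⟩ ⟨B₂, h₂⟩ => ⟨max B₁ B₂, fun z hz => hz.elim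
      (fun hz => (h₁ z hz).mono (le_max_left _ _))
      (fun hz => (h₂ z hz).mono (le_max_right _ _))⟩) ?_
  rintro ⟨x, y⟩ ⟨hx, hy⟩
  obtain ⟨r, hr, hxr⟩ := hloc x hx
  obtain ⟨s, hs, hys⟩ := hloc y hy
  obtain ⟨L, hL⟩ := hjoin x hx y hy
  refine ⟨(M ∩ ball x r) ×ˢ (M ∩ ball y s), nhdsWithin_prod (inter_mem_nhdsWithin M
    (ball_mem_nhds x hr)) (inter_mem_nhdsWithin M (ball_mem_nhds y hs)),
    C * r.toNNReal + L + C * s.toNNReal, ?_⟩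
  rintro ⟨p, q⟩ ⟨hp, hq⟩
  refine (((hxr p hp x ⟨hx, mem_ball_self hr⟩).trans hL).trans
    (hys y ⟨hy, mem_ball_self hs⟩ q hq)).mono ?_
  have hpx : nndist p x ≤ r.toNNReal := NNReal.le_toNNReal_of_coe_le (le_of_lt hp.2)
  have hyq : nndist y q ≤ s.toNNReal :=
    NNReal.le_toNNReal_of_coe_le (by rw [coe_nndist, dist_comm]; exact le_of_lt hq.2)
  gcongr

theorem IsCompact.exists_pos_lipschitzJoinedIn_of_dist_lt (hcpt : IsCompact M)
    (hloc : LocallyLipschitzJoined M C) :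
    ∃ δ > 0, ∀ p ∈ M, ∀ q ∈ M, dist p q < δ → LipschitzJoinedIn M (C * nndist p q) p q := by
  choose! r hr hjoin using hloc
  obtain ⟨δ, hδ, hcover⟩ := lebesgue_number_lemma_of_metric (c := fun x : M => ball x.1 (r x))
    hcpt (fun _ => isOpen_ball) fun x hx => mem_iUnion.2 ⟨⟨x, hx⟩, mem_ball_self (hr x hx)⟩
  refine ⟨δ, hδ, fun p hp q hq hpq => ?_⟩
  obtain ⟨⟨x, hx⟩, hball⟩ := hcover p hp
  exact hjoin x hx p ⟨hp, hball (mem_ball_self hδ)⟩ q ⟨hq, hball (mem_ball'.2 hpq)⟩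

theorem IsCompact.exists_lipschitzJoinedIn_mul_nndist (hcpt : IsCompact M)
    (hconn : IsPreconnected M) (hloc : LocallyLipschitzJoined M C) :
    ∃ a, ∀ p ∈ M, ∀ q ∈ M, LipschitzJoinedIn M (a * nndist p q) p q := by
  obtain ⟨δ, hδ, hnear⟩ := hcpt.exists_pos_lipschitzJoinedIn_of_dist_lt hloc
  obtain ⟨B, hB⟩ := hcpt.exists_lipschitzJoinedIn_le hloc
    fun p hp q hq => hconn.exists_lipschitzJoinedIn hloc hp hq
  refine ⟨C + B / δ.toNNReal, fun p hp q hq => ?_⟩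
  rcases lt_or_ge (dist p q) δ with hpq | hpq
  · exact (hnear p hp q hq hpq).mono (by gcongr; exact le_self_add)
  · refine (hB p hp q hq).mono ?_
    have hδ' : δ.toNNReal ≤ nndist p q := by
      rwa [Real.toNNReal_le_iff_le_coe, coe_nndist]
    calc B = B / δ.toNNReal * δ.toNNReal := by
          rw [div_mul_cancel₀ _ (Real.toNNReal_pos.2 hδ).ne']
      _ ≤ (C + B / δ.toNNReal) * nndist p q := by gcongr; exact le_add_self

end PathLength

namespace HasStrictFDerivAt

theorem eventually_mem_image_implicitFunction {𝕜 : Type*} [NontriviallyNormedField 𝕜]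
    [CompleteSpace 𝕜] {E F : Type*} [NormedAddCommGroup E] [NormedSpace 𝕜 E] [CompleteSpace E]
    [NormedAddCommGroup F] [NormedSpace 𝕜 F] [FiniteDimensional 𝕜 F] {g : E → F}
    {A : E →L[𝕜] F} {x : E} (hg : HasStrictFDerivAt g A x) (hA : A.range = ⊤)
    {t : Set A.ker} (ht : t ∈ 𝓝 0) :
    ∀ᶠ z in 𝓝 x, g z = g x → z ∈ hg.implicitFunction g A hA (g x) '' t := by
  set Φ := hg.implicitToOpenPartialHomeomorph g A hA
  have hΦ : ∀ᶠ z in 𝓝 x, (Φ z).2 ∈ t := by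
    refine (continuous_snd.continuousAt.comp
      (Φ.continuousAt (hg.mem_implicitToOpenPartialHomeomorph_source hA))).preimage_mem_nhds ?_
    simpa [Φ] using ht
  filter_upwards [hg.eq_implicitFunction hA, hΦ] with z hz hzt hgz
  exact ⟨_, hzt, by rwa [← hgz]⟩

theorem exists_lipschitzJoinedIn {E F : Type*} [NormedAddCommGroup E] [NormedSpace ℝ E]
    [CompleteSpace E] [NormedAddCommGroup F] [NormedSpace ℝ F] [FiniteDimensional ℝ F]
    {g : E → F} {A : E →L[ℝ] F} {x : E} (hg : HasStrictFDerivAt g A x) (hA : A.range = ⊤)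
    {M U : Set E} (hU : U ∈ 𝓝 x) (hMU : M ∩ U = {z ∈ U | g z = g x}) :
    ∃ r > 0, ∀ p ∈ M ∩ ball x r, ∀ q ∈ M ∩ ball x r,
      LipschitzJoinedIn M (3 * nndist p q) p q := by
  set φ := hg.implicitFunction g A hA (g x)
  have hφ : HasStrictFDerivAt φ A.ker.subtypeL 0 := hg.to_implicitFunction hA
  obtain ⟨s, hs, happrox⟩ := hφ.approximates_deriv_on_nhds (c := 2⁻¹) (Or.inr (by norm_num))
  have hlevel : ∀ᶠ y in 𝓝 (0 : A.ker), g (φ y) = g x :=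
    ((continuous_const.prodMk continuous_id).tendsto (0 : A.ker)).eventually
      (hg.map_implicitFunction_eq hA)
  have hφU : ∀ᶠ y in 𝓝 (0 : A.ker), φ y ∈ U :=
    hφ.continuousAt.preimage_mem_nhds
      (by rwa [show φ 0 = x from hg.implicitFunction_apply_image hA])
  obtain ⟨ρ, hρ, hball⟩ := Metric.mem_nhds_iff.1 (inter_mem hs (hlevel.and hφU))
  have hφM : MapsTo φ (ball 0 ρ) M := fun y hy =>
    (hMU.symm.subset ⟨(hball hy).2.2, (hball hy).2.1⟩).1
  obtain ⟨r, hr, hrep⟩ := Metric.eventually_nhds_iff.1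
    ((hg.eventually_mem_image_implicitFunction hA (ball_mem_nhds 0 hρ)).and hU)
  have hparam : ∀ p ∈ M ∩ ball x r, p ∈ φ '' ball 0 ρ := fun p ⟨hpM, hpr⟩ =>
    (hrep hpr).1 (hMU.subset ⟨hpM, (hrep hpr).2⟩).2
  refine ⟨r, hr, ?_⟩
  rintro _ hp _ hq
  obtain ⟨u, hu, rfl⟩ := hparam _ hp
  obtain ⟨v, hv, rfl⟩ := hparam _ hq
  convert (happrox.mono_set fun y hy => (hball hy).1).lipschitzJoinedIn (by simp) (by norm_num)
    (convex_ball 0 ρ) hφM hu hv using 2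
  -- `3 = (1 + 1/2) / (1 - 1/2)`
  rw [← NNReal.coe_inj]
  push_cast [NNReal.coe_sub (show (2⁻¹ : ℝ≥0) ≤ 1 by norm_num)]
  norm_num

end HasStrictFDerivAt

theorem stmt7_general {m d : ℕ}
    (M : Set (EuclideanSpace ℝ (Fin m)))
    (hcpt : IsCompact M) (hconn : IsConnected M)
    (hman : ∀ x ∈ M, ∃ U : Set (EuclideanSpace ℝ (Fin m)), IsOpen U ∧ x ∈ U ∧
      ∃ g : EuclideanSpace ℝ (Fin m) → EuclideanSpace ℝ (Fin (m - d)),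
        ContDiffOn ℝ 1 g U ∧
        (∀ z ∈ U, ∃ g' : EuclideanSpace ℝ (Fin m) →L[ℝ] EuclideanSpace ℝ (Fin (m - d)),
          HasFDerivAt g g' z ∧ Function.Surjective g') ∧
        M ∩ U = {z ∈ U | g z = 0}) :
    ∃ a > (0 : ℝ), ∀ x₁ ∈ M, ∀ x₂ ∈ M,
      ∃ γ : ℝ → EuclideanSpace ℝ (Fin m),
        (∃ K : NNReal, LipschitzOnWith K γ (Set.Icc 0 1)) ∧
        γ 0 = x₁ ∧ γ 1 = x₂ ∧ Set.MapsTo γ (Set.Icc 0 1) M ∧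
        eVariationOn γ (Set.Icc 0 1) ≤ ENNReal.ofReal (a * dist x₁ x₂) := by
  have hloc : LocallyLipschitzJoined M 3 := by
    intro x hx
    obtain ⟨U, hU, hxU, g, hg, hg', hMU⟩ := hman x hx
    obtain ⟨A, hA, hAsurj⟩ := hg' x hxU
    have hstrict : HasStrictFDerivAt g A x := hA.fderiv ▸
      (hg.contDiffAt (hU.mem_nhds hxU)).hasStrictFDerivAt one_ne_zero
    have hgx : g x = 0 := (hMU.subset ⟨hx, hxU⟩).2
    exact hstrict.exists_lipschitzJoinedIn (LinearMap.range_eq_top.2 hAsurj) (hU.mem_nhds hxU)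
      (hgx ▸ hMU)
  obtain ⟨a, ha⟩ := hcpt.exists_lipschitzJoinedIn_mul_nndist hconn.isPreconnected hloc
  refine ⟨a + 1, by positivity, fun x₁ hx₁ x₂ hx₂ => ?_⟩
  obtain ⟨γ, hγ, h0, h1, hM, hv⟩ := (ha x₁ hx₁ x₂ hx₂).mono
    (by gcongr; exact le_self_add : a * nndist x₁ x₂ ≤ (a + 1) * nndist x₁ x₂)
  refine ⟨γ, hγ, h0, h1, hM, hv.trans_eq ?_⟩
  rw [← ENNReal.ofReal_coe_nnreal, NNReal.coe_mul, coe_nndist, NNReal.coe_add, NNReal.coe_one]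

/-- A nonempty compact connected `d`-dimensional `C¹` submanifold of `ℝᵐ`
(locally a regular level set of a `C¹` submersion) satisfies property (CON): two points can
be joined inside `M` by a Lipschitz path of length at most `a·|x₁ − x₂|`. -/
theorem stmt7 {m d : ℕ} (hd : 1 ≤ d) (hdm : d < m)
    (M : Set (EuclideanSpace ℝ (Fin m)))
    (hne : M.Nonempty) (hcpt : IsCompact M) (hconn : IsConnected M)
    (hman : ∀ x ∈ M, ∃ U : Set (EuclideanSpace ℝ (Fin m)), IsOpen U ∧ x ∈ U ∧
      ∃ g : EuclideanSpace ℝ (Fin m) → EuclideanSpace ℝ (Fin (m - d)),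
        ContDiffOn ℝ 1 g U ∧
        (∀ z ∈ U, ∃ g' : EuclideanSpace ℝ (Fin m) →L[ℝ] EuclideanSpace ℝ (Fin (m - d)),
          HasFDerivAt g g' z ∧ Function.Surjective g') ∧
        M ∩ U = {z ∈ U | g z = 0}) :
    ∃ a > (0 : ℝ), ∀ x₁ ∈ M, ∀ x₂ ∈ M,
      ∃ γ : ℝ → EuclideanSpace ℝ (Fin m),
        (∃ K : NNReal, LipschitzOnWith K γ (Set.Icc 0 1)) ∧
        γ 0 = x₁ ∧ γ 1 = x₂ ∧ Set.MapsTo γ (Set.Icc 0 1) M ∧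
        eVariationOn γ (Set.Icc 0 1) ≤ ENNReal.ofReal (a * dist x₁ x₂) :=
  stmt7_general M hcpt hconn hman
end

section
/- Let γ : [w₁, w₂] → ℝᵐ be continuous with w₁ < w₂, and let r > 0. Define the sequence t₀ = w₁ and, recursively for i ≥ 0, t_{i+1} = sup{ t ∈ [t_i, w₂] : |γ(t_i) − γ(s)| ≤ r/2 for all s ∈ [t_i, t] }. Then the sequence (t_i) is nondecreasing, there exists an integer p ≥ 0 with t_p = w₂, and for every i < p the image γ([t_i, t_{i+1}]) is contained in the closed ball of radius r/2 centered at γ(t_i). -/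
/-- The covering sequence `t₀ = w₁`,
`t_{i+1} = sup{t ∈ [t_i, w₂] : |γ(t_i) − γ(s)| ≤ r/2 ∀ s ∈ [t_i, t]}` is nondecreasing,
reaches `w₂` in finitely many steps, and `γ([t_i, t_{i+1}])` lies in the closed ball of
radius `r/2` around `γ(t_i)`. -/
theorem stmt8 {m : ℕ} (w₁ w₂ : ℝ) (hw : w₁ < w₂) (r : ℝ) (hr : 0 < r)
    (γ : ℝ → EuclideanSpace ℝ (Fin m)) (hγ : ContinuousOn γ (Set.Icc w₁ w₂))
    (t : ℕ → ℝ) (ht0 : t 0 = w₁)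
    (htrec : ∀ i, t (i + 1) =
      sSup {s | s ∈ Set.Icc (t i) w₂ ∧ ∀ ξ ∈ Set.Icc (t i) s, ‖γ (t i) - γ ξ‖ ≤ r / 2}) :
    Monotone t ∧ ∃ p : ℕ, t p = w₂ ∧
      ∀ i < p, ∀ s ∈ Set.Icc (t i) (t (i + 1)),
        γ s ∈ Metric.closedBall (γ (t i)) (r / 2) := by
  set S : ℕ → Set ℝ := fun i =>
    {s | s ∈ Set.Icc (t i) w₂ ∧ ∀ ξ ∈ Set.Icc (t i) s, ‖γ (t i) - γ ξ‖ ≤ r / 2} with hS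
  have hbdd : ∀ i, BddAbove (S i) := fun i => ⟨w₂, fun s hs => hs.1.2⟩
  have hmemS : ∀ i, t i ∈ Set.Icc w₁ w₂ → t i ∈ S i := by
    intro i hi
    refine ⟨⟨le_refl _, hi.2⟩, ?_⟩
    intro ξ hξ
    have hξe : ξ = t i := le_antisymm hξ.2 hξ.1
    rw [hξe, sub_self, norm_zero]
    linarith
  have key : ∀ i, t i ∈ Set.Icc w₁ w₂ := by
    intro i
    induction i with
    | zero => rw [ht0]; exact ⟨le_refl _, hw.le⟩
    | succ n ih =>
      rw [htrec n]
      exact ⟨le_trans ih.1 (le_csSup (hbdd n) (hmemS n ih)),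
        csSup_le ⟨t n, hmemS n ih⟩ (fun s hs => hs.1.2)⟩
  have hstep : ∀ i, t i ≤ t (i + 1) := by
    intro i
    rw [htrec i]
    exact le_csSup (hbdd i) (hmemS i (key i))
  have hmono : Monotone t := monotone_nat_of_le_succ hstep
  -- the sup is attained: every point of [t i, t (i+1)] stays r/2-close to γ (t i)
  have hsupmem : ∀ i, ∀ ξ ∈ Set.Icc (t i) (t (i + 1)), ‖γ (t i) - γ ξ‖ ≤ r / 2 := by
    intro i
    have hlt_case : ∀ ξ ∈ Set.Ico (t i) (t (i + 1)), ‖γ (t i) - γ ξ‖ ≤ r / 2 := by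
      intro ξ hξ
      have hlt : ξ < sSup (S i) := htrec i ▸ hξ.2
      obtain ⟨s, hs, hξs⟩ := exists_lt_of_lt_csSup ⟨t i, hmemS i (key i)⟩ hlt
      exact hs.2 ξ ⟨hξ.1, hξs.le⟩
    intro ξ hξ
    rcases lt_or_eq_of_le hξ.2 with hlt | heq
    · exact hlt_case ξ ⟨hξ.1, hlt⟩
    · rw [heq]
      rcases eq_or_lt_of_le (hstep i) with he | hlt
      · rw [← he, sub_self, norm_zero]; linarith
      · -- continuity at the endpoint
        have hmem : t (i + 1) ∈ Set.Icc w₁ w₂ := key (i + 1)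
        have hsub : Set.Ico (t i) (t (i + 1)) ⊆ Set.Icc w₁ w₂ := fun u hu =>
          ⟨le_trans (key i).1 hu.1, le_trans hu.2.le (key (i + 1)).2⟩
        have hcw : ContinuousWithinAt γ (Set.Ico (t i) (t (i + 1))) (t (i + 1)) :=
          (hγ.continuousWithinAt hmem).mono hsub
        have hcf : ContinuousWithinAt (fun x => ‖γ (t i) - γ x‖)
            (Set.Ico (t i) (t (i + 1))) (t (i + 1)) :=
          (continuousWithinAt_const.sub hcw).norm
        haveI : (nhdsWithin (t (i + 1)) (Set.Ico (t i) (t (i + 1)))).NeBot :=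
          right_nhdsWithin_Ico_neBot hlt
        refine le_of_tendsto hcf ?_
        filter_upwards [self_mem_nhdsWithin] with u hu
        exact hlt_case u hu
  -- uniform continuity gives a uniform progress bound
  have hcomp : IsCompact (Set.Icc w₁ w₂) := isCompact_Icc
  have huc := hcomp.uniformContinuousOn_of_continuous hγ
  obtain ⟨δ, hδ, hδ'⟩ := Metric.uniformContinuousOn_iff.mp huc (r / 2) (by linarith)
  set ε : ℝ := δ / 2 with hε
  have hεpos : 0 < ε := by positivity
  have hprog : ∀ i, min (t i + ε) w₂ ≤ t (i + 1) := by
    intro i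
    rw [htrec i]
    apply le_csSup (hbdd i)
    have hc1 : t i ≤ min (t i + ε) w₂ := le_min (by linarith) (key i).2
    refine ⟨⟨hc1, min_le_right _ _⟩, ?_⟩
    intro ξ hξ
    have hξm : ξ ∈ Set.Icc w₁ w₂ :=
      ⟨le_trans (key i).1 hξ.1, le_trans hξ.2 (min_le_right _ _)⟩
    have hd : dist (t i) ξ < δ := by
      rw [Real.dist_eq, abs_sub_lt_iff]
      have := le_trans hξ.2 (min_le_left _ _)
      constructor <;> linarith [hξ.1]
    have := hδ' (t i) (key i) ξ hξm hd
    rw [dist_eq_norm] at this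
    linarith
  have hlow : ∀ n : ℕ, min (w₁ + n * ε) w₂ ≤ t n := by
    intro n
    induction n with
    | zero => simp [ht0]
    | succ n ih =>
      refine le_trans (le_min ?_ (min_le_right _ _)) (hprog n)
      rcases le_total (w₁ + n * ε) w₂ with h | h
      · rw [min_eq_left h] at ih
        have h1 : min (w₁ + (↑(n + 1) : ℝ) * ε) w₂ ≤ w₁ + (↑(n + 1) : ℝ) * ε :=
          min_le_left _ _
        have h2 : (↑(n + 1) : ℝ) * ε = ↑n * ε + ε := by push_cast; ring
        linarith
      · rw [min_eq_right h] at ih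
        have h1 : min (w₁ + (↑(n + 1) : ℝ) * ε) w₂ ≤ w₂ := min_le_right _ _
        linarith
  obtain ⟨n, hn⟩ := exists_nat_ge ((w₂ - w₁) / ε)
  have hnw : w₂ ≤ w₁ + n * ε := by
    have := (div_le_iff₀ hεpos).mp hn
    linarith
  have htn : t n = w₂ := by
    have := hlow n
    rw [min_eq_right hnw] at this
    exact le_antisymm (key n).2 this
  refine ⟨hmono, n, htn, ?_⟩
  intro i _ s hs
  rw [Metric.mem_closedBall, dist_eq_norm, ← norm_neg, neg_sub]
  exact hsupmem i s hs
end

section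
/- Let 0 < α < 1, 0 < λˢ < 1, 0 < λᵇ < 1, let S, B > 0, u, v ∈ [0,1], and let Y be a nonempty finite subset of (0,∞) × (0,∞). Set B⁺ = B(1−v) + S·u·(1−λᵇ), S⁺ = S(1−u) + B·v·(1−λˢ), and q = ((1−α)/α) · min(1, min_{(yˢ,yᵇ) ∈ Y} yᵇ/yˢ). Then B⁺ + S⁺ > 0 and the conjunction of the two regulatory constraints — B⁺/(B⁺ + S⁺) ≥ α, and B⁺yᵇ/(B⁺yᵇ + S⁺yˢ) ≥ α for every (yˢ,yᵇ) ∈ Y — is equivalent to the single inequality c(u,v,S,B) := S(1−u) + v·B·(1−λˢ) − q·[B(1−v) + u·S·(1−λᵇ)] ≤ 0. -/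
set_option maxHeartbeats 1000000

/-- Equivalence of the two regulatory constraints of the asset-allocation
model with the single inequality `c(u,v,S,B) ≤ 0`. -/
theorem stmt10 (α lams lamb : ℝ) (hα : 0 < α) (hα1 : α < 1)
    (hlams : 0 < lams) (hlams1 : lams < 1) (hlamb : 0 < lamb) (hlamb1 : lamb < 1)
    (S B : ℝ) (hS : 0 < S) (hB : 0 < B)
    (u v : ℝ) (hu : u ∈ Set.Icc (0 : ℝ) 1) (hv : v ∈ Set.Icc (0 : ℝ) 1)
    (Y : Finset (ℝ × ℝ)) (hY : Y.Nonempty) (hYpos : ∀ y ∈ Y, 0 < y.1 ∧ 0 < y.2)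
    (Bp Sp q : ℝ)
    (hBp : Bp = B * (1 - v) + S * u * (1 - lamb))
    (hSp : Sp = S * (1 - u) + B * v * (1 - lams))
    (hq : q = (1 - α) / α * min 1 (Y.inf' hY fun y => y.2 / y.1)) :
    0 < Bp + Sp ∧
      ((α ≤ Bp / (Bp + Sp) ∧ ∀ y ∈ Y, α ≤ Bp * y.2 / (Bp * y.2 + Sp * y.1)) ↔
        S * (1 - u) + v * B * (1 - lams) - q * (B * (1 - v) + u * S * (1 - lamb)) ≤ 0) := by
  obtain ⟨hu0, hu1⟩ := hu
  obtain ⟨hv0, hv1⟩ := hv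
  have hBp0 : 0 ≤ Bp := by
    rw [hBp]
    have := mul_nonneg hB.le (by linarith : (0:ℝ) ≤ 1 - v)
    have := mul_nonneg (mul_nonneg hS.le hu0) (by linarith : (0:ℝ) ≤ 1 - lamb)
    linarith
  have hSp0 : 0 ≤ Sp := by
    rw [hSp]
    have := mul_nonneg hS.le (by linarith : (0:ℝ) ≤ 1 - u)
    have := mul_nonneg (mul_nonneg hB.le hv0) (by linarith : (0:ℝ) ≤ 1 - lams)
    linarith
  have hsum : 0 < Bp + Sp := by
    have h1 : 0 < S * (1 - u * lamb) := by
      apply mul_pos hS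
      nlinarith
    have := mul_nonneg hB.le (by linarith : (0:ℝ) ≤ 1 - v)
    have := mul_nonneg (mul_nonneg hB.le hv0) (by linarith : (0:ℝ) ≤ 1 - lams)
    rw [hBp, hSp]; nlinarith
  refine ⟨hsum, ?_⟩
  have hor : 0 < Bp ∨ 0 < Sp := by
    rcases lt_or_eq_of_le hBp0 with h | h
    · exact Or.inl h
    · right; linarith
  have hm0 : 0 < Y.inf' hY fun y => y.2 / y.1 := by
    rw [Finset.lt_inf'_iff]
    intro y hy
    exact div_pos (hYpos y hy).2 (hYpos y hy).1
  have hrhs : (S * (1 - u) + v * B * (1 - lams) - q * (B * (1 - v) + u * S * (1 - lamb)) ≤ 0)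
      ↔ Sp ≤ q * Bp := by
    rw [hSp, hBp]; constructor <;> intro h <;> nlinarith [h]
  rw [hrhs]
  have hA : (α ≤ Bp / (Bp + Sp)) ↔ α * Sp ≤ (1 - α) * Bp := by
    rw [le_div_iff₀ hsum]
    constructor <;> intro h <;> nlinarith
  have hBy : ∀ y ∈ Y, ((α ≤ Bp * y.2 / (Bp * y.2 + Sp * y.1)) ↔ α * (Sp * y.1) ≤ (1 - α) * (Bp * y.2)) := by
    intro y hy
    obtain ⟨hy1, hy2⟩ := hYpos y hy
    have hd : 0 < Bp * y.2 + Sp * y.1 := by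
      rcases hor with h | h
      · have := mul_nonneg hSp0 hy1.le
        nlinarith
      · have := mul_nonneg hBp0 hy2.le
        nlinarith
    rw [le_div_iff₀ hd]
    constructor <;> intro h <;> nlinarith
  constructor
  · rintro ⟨h1, h2⟩
    rw [hq]
    rcases min_cases 1 (Y.inf' hY fun y => y.2 / y.1) with ⟨heq, _⟩ | ⟨heq, hle⟩
    · rw [heq]
      have hh := hA.mp h1
      have he : (1 - α) / α * 1 * Bp = (1 - α) * Bp / α := by ring
      rw [he, le_div_iff₀ hα]
      calc Sp * α = α * Sp := by ring
        _ ≤ (1 - α) * Bp := hh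
    · rw [heq]
      obtain ⟨y, hy, hym⟩ := Finset.exists_mem_eq_inf' hY fun y => y.2 / y.1
      obtain ⟨hy1, hy2⟩ := hYpos y hy
      have hk := (hBy y hy).mp (h2 y hy)
      rw [hym]
      have he : (1 - α) / α * (y.2 / y.1) * Bp = (1 - α) * (Bp * y.2) / (α * y.1) := by
        field_simp
      rw [he, le_div_iff₀ (by positivity)]
      calc Sp * (α * y.1) = α * (Sp * y.1) := by ring
        _ ≤ (1 - α) * (Bp * y.2) := hk
  · intro h
    have hmin0 : 0 ≤ min 1 (Y.inf' hY fun y => y.2 / y.1) := le_min zero_le_one hm0.le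
    have hαq : α * Sp ≤ (1 - α) * min 1 (Y.inf' hY fun y => y.2 / y.1) * Bp := by
      have h2 := mul_le_mul_of_nonneg_left h hα.le
      rw [hq] at h2
      have he : α * ((1 - α) / α * min 1 (Y.inf' hY fun y => y.2 / y.1) * Bp)
          = (1 - α) * min 1 (Y.inf' hY fun y => y.2 / y.1) * Bp := by
        field_simp
      linarith
    have h1α : (0:ℝ) < 1 - α := by linarith
    constructor
    · rw [hA]
      have hmin1 : min 1 (Y.inf' hY fun y => y.2 / y.1) ≤ 1 := min_le_left _ _
      nlinarith [mul_nonneg h1α.le hBp0]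
    · intro y hy
      obtain ⟨hy1, hy2⟩ := hYpos y hy
      rw [hBy y hy]
      have hmy : min 1 (Y.inf' hY fun y => y.2 / y.1) ≤ y.2 / y.1 :=
        le_trans (min_le_right _ _) (Finset.inf'_le _ hy)
      have key : α * Sp ≤ (1 - α) * (y.2 / y.1) * Bp := by
        nlinarith [mul_nonneg h1α.le hBp0]
      have h3 := mul_le_mul_of_nonneg_right key hy1.le
      have hd : (1 - α) * (y.2 / y.1) * Bp * y.1 = (1 - α) * (Bp * y.2) := by
        field_simp
      rw [hd] at h3
      calc α * (Sp * y.1) = α * Sp * y.1 := by ring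
        _ ≤ (1 - α) * (Bp * y.2) := h3
end

section
/- (Lipschitz value function for the asset-allocation model.) Fix N ≥ 1 and 0 < λˢ, λᵇ < 1. For k = 0,…,N−1, let Y_k be a nonempty finite subset of (0,∞) × (0,∞) with probability weights p_k : Y_k → [0,1], Σ_{y ∈ Y_k} p_k(y) = 1, and let q_k > 0, δ_k = 1/(q_k(1−λᵇ)+1). Define y̲_k = min_{(yˢ,yᵇ) ∈ Y_k} min(yˢ,yᵇ), ȳ_k = max_{(yˢ,yᵇ) ∈ Y_k} max(yˢ,yᵇ). Let Δ₀ > 0, D₀ > 2Δ₀, and recursively Δ_{k+1} = Δ_k(1−δ_k)·y̲_k, D_{k+1} = D_k·ȳ_k. Set X_k = {(S,B) : S ≥ Δ_k, B ≥ Δ_k, S+B ≤ D_k}, U_k(S,B) = {(u,v) ∈ [0,δ_k]² : S(1−u) + vB(1−λˢ) − q_k[B(1−v) + uS(1−λᵇ)] ≤ 0}, and f_k(S,B,u,v,yˢ,yᵇ) = ( [S(1−u) + Bv(1−λˢ)]yˢ, [B(1−v) + Su(1−λᵇ)]yᵇ ). Let g : [0,∞) × [0,∞) → ℝ be Lipschitz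 continuous, and define J_N = g on X_N and, for k = N−1,…,0 and (S,B) ∈ X_k, J_k(S,B) = max_{(u,v) ∈ U_k(S,B)} Σ_{y ∈ Y_k} p_k(y) · J_{k+1}(f_k(S,B,u,v,y)). Then for every k = 0,…,N, the value function J_k is Lipschitz continuous on X_k. -/
private lemma mulbd15 {a a' b b' da db M : ℝ} (h1 : |a - a'| ≤ da) (h2 : |b - b'| ≤ db)
    (hb : |b| ≤ 1) (ha' : |a'| ≤ M) : |a * b - a' * b'| ≤ da + M * db := by
  have h : a * b - a' * b' = (a - a') * b + a' * (b - b') := by ring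
  rw [h]
  calc |(a - a') * b + a' * (b - b')| ≤ |(a - a') * b| + |a' * (b - b')| := abs_add_le _ _
    _ = |a - a'| * |b| + |a'| * |b - b'| := by rw [abs_mul, abs_mul]
    _ ≤ da * 1 + M * db :=
        add_le_add (mul_le_mul h1 hb (abs_nonneg _) ((abs_nonneg _).trans h1))
          (mul_le_mul ha' h2 (abs_nonneg _) ((abs_nonneg _).trans ha'))
    _ = da + M * db := by ring

private lemma prodbd15 {x c d : ℝ} (hx : |x| ≤ d) (hc0 : 0 ≤ c) (hc1 : c ≤ 1) :
    x * c ≤ d := by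
  have h1 : x ≤ d := (le_abs_self x).trans hx
  have hd0 : 0 ≤ d := (abs_nonneg x).trans hx
  nlinarith

set_option maxHeartbeats 2000000 in
/-- The value functions of the constrained asset-allocation model,
obtained by the dynamic-programming recursion, are Lipschitz continuous on the state
regions `X_k`. -/
theorem stmt15 (N : ℕ) (hN : 1 ≤ N) (lams lamb : ℝ)
    (hlams : 0 < lams) (hlams1 : lams < 1) (hlamb : 0 < lamb) (hlamb1 : lamb < 1)
    (Y : ℕ → Finset (ℝ × ℝ)) (hYne : ∀ k, (Y k).Nonempty)
    (hYpos : ∀ k, ∀ y ∈ Y k, 0 < y.1 ∧ 0 < y.2)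
    (p : ℕ → ℝ × ℝ → ℝ) (hp0 : ∀ k, ∀ y ∈ Y k, 0 ≤ p k y ∧ p k y ≤ 1)
    (hp1 : ∀ k, ∑ y ∈ Y k, p k y = 1)
    (q : ℕ → ℝ) (hq : ∀ k, 0 < q k)
    (δ : ℕ → ℝ) (hδ : ∀ k, δ k = 1 / (q k * (1 - lamb) + 1))
    (ylo yhi : ℕ → ℝ)
    (hylo : ∀ k, ylo k = (Y k).inf' (hYne k) fun y => min y.1 y.2)
    (hyhi : ∀ k, yhi k = (Y k).sup' (hYne k) fun y => max y.1 y.2)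
    (Δ D : ℕ → ℝ) (hΔ0 : 0 < Δ 0) (hD0 : 2 * Δ 0 < D 0)
    (hΔ : ∀ k, Δ (k + 1) = Δ k * (1 - δ k) * ylo k)
    (hD : ∀ k, D (k + 1) = D k * yhi k)
    (X : ℕ → Set (ℝ × ℝ))
    (hX : ∀ k, X k = {s | Δ k ≤ s.1 ∧ Δ k ≤ s.2 ∧ s.1 + s.2 ≤ D k})
    (U : ℕ → ℝ × ℝ → Set (ℝ × ℝ))
    (hU : ∀ k s, U k s = {w | w.1 ∈ Set.Icc 0 (δ k) ∧ w.2 ∈ Set.Icc 0 (δ k) ∧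
      s.1 * (1 - w.1) + w.2 * s.2 * (1 - lams) -
        q k * (s.2 * (1 - w.2) + w.1 * s.1 * (1 - lamb)) ≤ 0})
    (f : ℕ → ℝ × ℝ → ℝ × ℝ → ℝ × ℝ → ℝ × ℝ)
    (hf : ∀ k s w y, f k s w y =
      ((s.1 * (1 - w.1) + s.2 * w.2 * (1 - lams)) * y.1,
       (s.2 * (1 - w.2) + s.1 * w.1 * (1 - lamb)) * y.2))
    (g : ℝ × ℝ → ℝ) (Lg : ℝ) (hLg : 0 ≤ Lg)
    (hg : ∀ a : ℝ × ℝ, 0 ≤ a.1 → 0 ≤ a.2 → ∀ b : ℝ × ℝ, 0 ≤ b.1 → 0 ≤ b.2 →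
      |g a - g b| ≤ Lg * dist a b)
    (J : ℕ → ℝ × ℝ → ℝ)
    (hJN : ∀ s ∈ X N, J N s = g s)
    (hJ : ∀ k < N, ∀ s ∈ X k,
      J k s = sSup ((fun w => ∑ y ∈ Y k, p k y * J (k + 1) (f k s w y)) '' U k s)) :
    ∀ k ≤ N, ∃ C : ℝ, 0 ≤ C ∧ ∀ s ∈ X k, ∀ s' ∈ X k,
      |J k s - J k s'| ≤ C * dist s s' := by
  -- preliminaries
  have hqlb : ∀ k, 0 < q k * (1 - lamb) + 1 := fun k => by
    have := mul_pos (hq k) (show (0:ℝ) < 1 - lamb by linarith)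
    linarith
  have hδ0 : ∀ k, 0 < δ k := fun k => by rw [hδ]; exact div_pos one_pos (hqlb k)
  have hδ1 : ∀ k, δ k < 1 := fun k => by
    rw [hδ, div_lt_one (hqlb k)]
    have := mul_pos (hq k) (show (0:ℝ) < 1 - lamb by linarith)
    linarith
  have hδeq : ∀ k, δ k * (q k * (1 - lamb) + 1) = 1 := fun k => by
    rw [hδ, one_div, inv_mul_cancel₀ (hqlb k).ne']
  have hylo_le : ∀ k, ∀ y ∈ Y k, ylo k ≤ y.1 ∧ ylo k ≤ y.2 := by
    intro k y hy
    rw [hylo]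
    exact ⟨(Finset.inf'_le (fun y => min y.1 y.2) hy).trans (min_le_left _ _),
      (Finset.inf'_le (fun y => min y.1 y.2) hy).trans (min_le_right _ _)⟩
  have hyhi_ge : ∀ k, ∀ y ∈ Y k, y.1 ≤ yhi k ∧ y.2 ≤ yhi k := by
    intro k y hy
    rw [hyhi]
    exact ⟨(le_max_left _ _).trans (Finset.le_sup' (fun y => max y.1 y.2) hy),
      (le_max_right _ _).trans (Finset.le_sup' (fun y => max y.1 y.2) hy)⟩
  have hylopos : ∀ k, 0 < ylo k := by
    intro k
    rw [hylo, Finset.lt_inf'_iff]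
    intro y hy
    exact lt_min (hYpos k y hy).1 (hYpos k y hy).2
  have hyhipos : ∀ k, 0 < yhi k := by
    intro k
    obtain ⟨y, hy⟩ := hYne k
    exact lt_of_lt_of_le (hYpos k y hy).1 (hyhi_ge k y hy).1
  have hΔpos : ∀ k, 0 < Δ k := by
    intro k
    induction k with
    | zero => exact hΔ0
    | succ n ih =>
      rw [hΔ]
      exact mul_pos (mul_pos ih (by linarith [hδ1 n])) (hylopos n)
  have hDpos : ∀ k, 0 < D k := by
    intro k
    induction k with
    | zero => linarith
    | succ n ih => rw [hD]; exact mul_pos ih (hyhipos n)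
  have hdist1 : ∀ x y : ℝ × ℝ, |x.1 - y.1| ≤ dist x y := by
    intro x y
    rw [Prod.dist_eq, Real.dist_eq, Real.dist_eq]; exact le_max_left _ _
  have hdist2 : ∀ x y : ℝ × ℝ, |x.2 - y.2| ≤ dist x y := by
    intro x y
    rw [Prod.dist_eq, Real.dist_eq, Real.dist_eq]; exact le_max_right _ _
  -- base case
  have hbase : ∃ C : ℝ, 0 ≤ C ∧ ∀ s ∈ X N, ∀ s' ∈ X N, |J N s - J N s'| ≤ C * dist s s' := by
    refine ⟨Lg, hLg, fun s hs s' hs' => ?_⟩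
    rw [hJN s hs, hJN s' hs']
    rw [hX] at hs hs'
    exact hg s ((hΔpos N).le.trans hs.1) ((hΔpos N).le.trans hs.2.1)
      s' ((hΔpos N).le.trans hs'.1) ((hΔpos N).le.trans hs'.2.1)
  -- main induction (downward)
  have main : ∀ m : ℕ, ∀ k ≤ N, N - k ≤ m →
      ∃ C : ℝ, 0 ≤ C ∧ ∀ s ∈ X k, ∀ s' ∈ X k, |J k s - J k s'| ≤ C * dist s s' := by
    intro m
    induction m with
    | zero =>
      intro k hk hm
      have hkN : k = N := by omega
      subst hkN
      exact hbase
    | succ m ih =>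
      intro k hk hm
      rcases eq_or_lt_of_le hk with rfl | hklt
      · exact hbase
      obtain ⟨C', hC'0, hC'⟩ := ih (k + 1) (by omega) (by omega)
      -- notation-level facts
      have hδk0 := hδ0 k
      have hδk1 := hδ1 k
      have hΔk := hΔpos k
      have hDk := hDpos k
      have hyh := hyhipos k
      have hqk := hq k
      -- (A) the point (δ k, 0) is always admissible
      have hmemU : ∀ s ∈ X k, ((δ k, 0) : ℝ × ℝ) ∈ U k s := by
        intro s hs
        rw [hX] at hs
        obtain ⟨hs1, hs2, hs3⟩ := hs
        rw [hU]
        refine ⟨⟨hδk0.le, le_rfl⟩, ⟨le_rfl, hδk0.le⟩, ?_⟩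
        show s.1 * (1 - δ k) + 0 * s.2 * (1 - lams) -
          q k * (s.2 * (1 - 0) + δ k * s.1 * (1 - lamb)) ≤ 0
        have key : s.1 * (1 - δ k) + 0 * s.2 * (1 - lams) -
            q k * (s.2 * (1 - 0) + δ k * s.1 * (1 - lamb)) = -(q k * s.2) := by
          linear_combination (-s.1) * hδeq k
        have h2 : 0 ≤ q k * s.2 := mul_nonneg hqk.le (hΔk.le.trans hs2)
        linarith [key]
      -- (B) perturbation of admissible controls
      have hperturb : ∀ s ∈ X k, ∀ s' ∈ X k, ∀ w ∈ U k s, ∃ w' ∈ U k s',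
          dist w w' ≤ (2 * (1 + q k) / (q k * Δ k)) * dist s s' := by
        intro s hs s' hs' w hw
        rw [hX] at hs hs'
        obtain ⟨hs1, hs2, hs3⟩ := hs
        obtain ⟨hs'1, hs'2, hs'3⟩ := hs'
        rw [hU] at hw
        obtain ⟨⟨hu0, hu1⟩, ⟨hv0, hv1⟩, hcon⟩ := hw
        set d := dist s s' with hdd
        have hd0 : 0 ≤ d := dist_nonneg
        have hds1 : |s'.1 - s.1| ≤ d := by rw [abs_sub_comm]; exact hdist1 s s'
        have hds2 : |s'.2 - s.2| ≤ d := by rw [abs_sub_comm]; exact hdist2 s s'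
        obtain ⟨hl1, hr1⟩ := abs_le.mp hds1
        obtain ⟨hl2, hr2⟩ := abs_le.mp hds2
        have hqΔ : 0 < q k * Δ k := mul_pos hqk hΔk
        set K := 2 * (1 + q k) with hKdef
        have hK0 : 0 < K := by rw [hKdef]; linarith [hq k]
        set t := min 1 (K * d / (q k * Δ k)) with htdef
        have ht0 : 0 ≤ t :=
          le_min zero_le_one (div_nonneg (mul_nonneg hK0.le hd0) hqΔ.le)
        have ht1 : t ≤ 1 := min_le_left _ _
        have hKd_le : K * d ≤ t * (K * d + q k * Δ k) := by
          rcases le_total (q k * Δ k) (K * d) with hc | hc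
          · have ht : t = 1 := by
              rw [htdef]
              exact min_eq_left ((one_le_div hqΔ).mpr hc)
            rw [ht]; linarith
          · have ht : t * (q k * Δ k) = K * d := by
              rw [htdef, min_eq_right ((div_le_one hqΔ).mpr hc), div_mul_cancel₀ _ hqΔ.ne']
            linarith [ht, mul_nonneg ht0 (mul_nonneg hK0.le hd0)]
        -- the affine-in-w value at (s', w) is at most K * d
        have hc10 : (0:ℝ) ≤ 1 - w.1 := by linarith
        have hc11 : 1 - w.1 ≤ 1 := by linarith
        have hc20 : (0:ℝ) ≤ 1 - w.2 := by linarith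
        have hc21 : 1 - w.2 ≤ 1 := by linarith
        have habs21 : |s.2 - s'.2| ≤ d := hdist2 s s'
        have habs11 : |s.1 - s'.1| ≤ d := hdist1 s s'
        have e1 : (s'.1 - s.1) * (1 - w.1) ≤ d := prodbd15 hds1 hc10 hc11
        have e2 : (s'.2 - s.2) * (w.2 * (1 - lams)) ≤ d := by
          have hcc0 : (0:ℝ) ≤ w.2 * (1 - lams) := mul_nonneg hv0 (by linarith)
          have hcc1 : w.2 * (1 - lams) ≤ 1 :=
            mul_le_one₀ (by linarith) (by linarith) (by linarith)
          exact prodbd15 hds2 hcc0 hcc1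
        have e3 : q k * ((s.2 - s'.2) * (1 - w.2)) ≤ q k * d :=
          mul_le_mul_of_nonneg_left (prodbd15 habs21 hc20 hc21) hqk.le
        have e4 : q k * ((s.1 - s'.1) * (w.1 * (1 - lamb))) ≤ q k * d := by
          have hcc0 : (0:ℝ) ≤ w.1 * (1 - lamb) := mul_nonneg hu0 (by linarith)
          have hcc1 : w.1 * (1 - lamb) ≤ 1 :=
            mul_le_one₀ (by linarith) (by linarith) (by linarith)
          exact mul_le_mul_of_nonneg_left (prodbd15 habs11 hcc0 hcc1) hqk.le
        have hsplit : s'.1 * (1 - w.1) + w.2 * s'.2 * (1 - lams) -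
            q k * (s'.2 * (1 - w.2) + w.1 * s'.1 * (1 - lamb)) =
            (s.1 * (1 - w.1) + w.2 * s.2 * (1 - lams) -
              q k * (s.2 * (1 - w.2) + w.1 * s.1 * (1 - lamb)))
            + (s'.1 - s.1) * (1 - w.1) + (s'.2 - s.2) * (w.2 * (1 - lams))
            + q k * ((s.2 - s'.2) * (1 - w.2)) + q k * ((s.1 - s'.1) * (w.1 * (1 - lamb))) := by
          ring
        have hKd2 : K * d = 2 * d + 2 * (q k * d) := by rw [hKdef]; ring
        have hE' : s'.1 * (1 - w.1) + w.2 * s'.2 * (1 - lams) -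
            q k * (s'.2 * (1 - w.2) + w.1 * s'.1 * (1 - lamb)) ≤ K * d := by
          linarith [hsplit, e1, e2, e3, e4, hcon, hKd2]
        refine ⟨((1 - t) * w.1 + t * δ k, (1 - t) * w.2), ?_, ?_⟩
        · rw [hU]
          refine ⟨⟨?_, ?_⟩, ⟨?_, ?_⟩, ?_⟩
          · show (0:ℝ) ≤ (1 - t) * w.1 + t * δ k
            linarith [mul_nonneg (by linarith : (0:ℝ) ≤ 1 - t) hu0,
              mul_nonneg ht0 hδk0.le]
          · show (1 - t) * w.1 + t * δ k ≤ δ k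
            linarith [mul_le_mul_of_nonneg_left hu1 (by linarith : (0:ℝ) ≤ 1 - t)]
          · show (0:ℝ) ≤ (1 - t) * w.2
            exact mul_nonneg (by linarith) hv0
          · show (1 - t) * w.2 ≤ δ k
            linarith [mul_nonneg ht0 hv0, hv1]
          · show s'.1 * (1 - ((1 - t) * w.1 + t * δ k)) + (1 - t) * w.2 * s'.2 * (1 - lams) -
              q k * (s'.2 * (1 - (1 - t) * w.2) + ((1 - t) * w.1 + t * δ k) * s'.1 * (1 - lamb)) ≤ 0
            have hid : s'.1 * (1 - ((1 - t) * w.1 + t * δ k)) + (1 - t) * w.2 * s'.2 * (1 - lams) -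
                q k * (s'.2 * (1 - (1 - t) * w.2) + ((1 - t) * w.1 + t * δ k) * s'.1 * (1 - lamb)) =
                (1 - t) * (s'.1 * (1 - w.1) + w.2 * s'.2 * (1 - lams) -
                  q k * (s'.2 * (1 - w.2) + w.1 * s'.1 * (1 - lamb))) - t * (q k * s'.2) := by
              linear_combination (-(t * s'.1)) * hδeq k
            have h5 : (1 - t) * (s'.1 * (1 - w.1) + w.2 * s'.2 * (1 - lams) -
                q k * (s'.2 * (1 - w.2) + w.1 * s'.1 * (1 - lamb))) ≤ (1 - t) * (K * d) :=
              mul_le_mul_of_nonneg_left hE' (by linarith)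
            have h6 : t * (q k * Δ k) ≤ t * (q k * s'.2) :=
              mul_le_mul_of_nonneg_left (mul_le_mul_of_nonneg_left hs'2 hqk.le) ht0
            linarith [hKd_le, h5, h6, hid]
        · rw [Prod.dist_eq]
          have hgoal1 : |w.1 - ((1 - t) * w.1 + t * δ k)| ≤ t := by
            have h : w.1 - ((1 - t) * w.1 + t * δ k) = t * (w.1 - δ k) := by ring
            rw [h, abs_mul, abs_of_nonneg ht0]
            have habs : |w.1 - δ k| ≤ 1 := abs_le.mpr ⟨by linarith, by linarith⟩
            linarith [mul_le_mul_of_nonneg_left habs ht0]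
          have hgoal2 : |w.2 - (1 - t) * w.2| ≤ t := by
            have h : w.2 - (1 - t) * w.2 = t * w.2 := by ring
            rw [h, abs_mul, abs_of_nonneg ht0]
            have habs : |w.2| ≤ 1 := abs_le.mpr ⟨by linarith, by linarith⟩
            linarith [mul_le_mul_of_nonneg_left habs ht0]
          have htK : t ≤ K / (q k * Δ k) * d := by
            calc t ≤ K * d / (q k * Δ k) := min_le_right _ _
              _ = K / (q k * Δ k) * d := by ring
          apply max_le
          · rw [Real.dist_eq]
            exact le_trans hgoal1 htK
          · rw [Real.dist_eq]
            exact le_trans hgoal2 htK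
      -- (C) the dynamics map into X (k+1)
      have hfX : ∀ s ∈ X k, ∀ w : ℝ × ℝ, 0 ≤ w.1 → w.1 ≤ δ k → 0 ≤ w.2 → w.2 ≤ δ k →
          ∀ y ∈ Y k, f k s w y ∈ X (k + 1) := by
        intro s hs w hu0 hu1 hv0 hv1 y hy
        rw [hX] at hs
        obtain ⟨hs1, hs2, hs3⟩ := hs
        rw [hX, hf]
        obtain ⟨hy1lo, hy2lo⟩ := hylo_le k y hy
        obtain ⟨hy1hi, hy2hi⟩ := hyhi_ge k y hy
        have hy1p := (hYpos k y hy).1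
        have hy2p := (hYpos k y hy).2
        have hylop := hylopos k
        have hSnn : (0:ℝ) ≤ s.1 := hΔk.le.trans hs1
        have hBnn : (0:ℝ) ≤ s.2 := hΔk.le.trans hs2
        have hA1 : Δ k * (1 - δ k) ≤ s.1 * (1 - w.1) + s.2 * w.2 * (1 - lams) := by
          linarith [mul_nonneg (sub_nonneg.mpr hs1) (by linarith : (0:ℝ) ≤ 1 - w.1),
            mul_nonneg hΔk.le (by linarith : (0:ℝ) ≤ δ k - w.1),
            mul_nonneg (mul_nonneg hBnn hv0) (by linarith : (0:ℝ) ≤ 1 - lams)]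
        have hA2 : Δ k * (1 - δ k) ≤ s.2 * (1 - w.2) + s.1 * w.1 * (1 - lamb) := by
          linarith [mul_nonneg (sub_nonneg.mpr hs2) (by linarith : (0:ℝ) ≤ 1 - w.2),
            mul_nonneg hΔk.le (by linarith : (0:ℝ) ≤ δ k - w.2),
            mul_nonneg (mul_nonneg hSnn hu0) (by linarith : (0:ℝ) ≤ 1 - lamb)]
        have hA0 : (0:ℝ) ≤ Δ k * (1 - δ k) := mul_nonneg hΔk.le (by linarith)
        refine ⟨?_, ?_, ?_⟩
        · show Δ (k + 1) ≤ (s.1 * (1 - w.1) + s.2 * w.2 * (1 - lams)) * y.1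
          rw [hΔ]
          exact mul_le_mul hA1 hy1lo hylop.le (hA0.trans hA1)
        · show Δ (k + 1) ≤ (s.2 * (1 - w.2) + s.1 * w.1 * (1 - lamb)) * y.2
          rw [hΔ]
          exact mul_le_mul hA2 hy2lo hylop.le (hA0.trans hA2)
        · show (s.1 * (1 - w.1) + s.2 * w.2 * (1 - lams)) * y.1 +
            (s.2 * (1 - w.2) + s.1 * w.1 * (1 - lamb)) * y.2 ≤ D (k + 1)
          rw [hD]
          have h1 : (s.1 * (1 - w.1) + s.2 * w.2 * (1 - lams)) * y.1 ≤
              (s.1 * (1 - w.1) + s.2 * w.2 * (1 - lams)) * yhi k :=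
            mul_le_mul_of_nonneg_left hy1hi (hA0.trans hA1)
          have h2 : (s.2 * (1 - w.2) + s.1 * w.1 * (1 - lamb)) * y.2 ≤
              (s.2 * (1 - w.2) + s.1 * w.1 * (1 - lamb)) * yhi k :=
            mul_le_mul_of_nonneg_left hy2hi (hA0.trans hA2)
          have hsum : (s.1 * (1 - w.1) + s.2 * w.2 * (1 - lams)) +
              (s.2 * (1 - w.2) + s.1 * w.1 * (1 - lamb)) ≤ s.1 + s.2 := by
            linarith [mul_nonneg (mul_nonneg hSnn hu0) hlamb.le,
              mul_nonneg (mul_nonneg hBnn hv0) hlams.le]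
          have h3 : ((s.1 * (1 - w.1) + s.2 * w.2 * (1 - lams)) +
              (s.2 * (1 - w.2) + s.1 * w.1 * (1 - lamb))) * yhi k ≤ (s.1 + s.2) * yhi k :=
            mul_le_mul_of_nonneg_right hsum hyh.le
          have h4 : (s.1 + s.2) * yhi k ≤ D k * yhi k :=
            mul_le_mul_of_nonneg_right hs3 hyh.le
          linarith [h1, h2, h3, h4]
      -- (D) Lipschitz bound for the dynamics
      have hflip : ∀ s ∈ X k, ∀ s' ∈ X k, ∀ w w' : ℝ × ℝ,
          0 ≤ w.1 → w.1 ≤ δ k → 0 ≤ w.2 → w.2 ≤ δ k →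
          0 ≤ w'.1 → w'.1 ≤ δ k → 0 ≤ w'.2 → w'.2 ≤ δ k →
          ∀ y ∈ Y k, dist (f k s w y) (f k s' w' y) ≤
            2 * yhi k * (dist s s' + D k * dist w w') := by
        intro s hs s' hs' w w' hu0 hu1 hv0 hv1 hu'0 hu'1 hv'0 hv'1 y hy
        rw [hX] at hs hs'
        obtain ⟨hs1, hs2, hs3⟩ := hs
        obtain ⟨hs'1, hs'2, hs'3⟩ := hs'
        obtain ⟨hy1hi, hy2hi⟩ := hyhi_ge k y hy
        have hy1p := (hYpos k y hy).1
        have hy2p := (hYpos k y hy).2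
        have hds1 := hdist1 s s'
        have hds2 := hdist2 s s'
        have hdw1 := hdist1 w w'
        have hdw2 := hdist2 w w'
        have hS'le : |s'.1| ≤ D k := abs_le.mpr ⟨by linarith, by linarith⟩
        have hB'le : |s'.2| ≤ D k := abs_le.mpr ⟨by linarith, by linarith⟩
        have hb1 : |1 - w.1| ≤ 1 := abs_le.mpr ⟨by linarith, by linarith⟩
        have hb2 : |w.2| ≤ 1 := abs_le.mpr ⟨by linarith, by linarith⟩
        have hb3 : |1 - w.2| ≤ 1 := abs_le.mpr ⟨by linarith, by linarith⟩
        have hb4 : |w.1| ≤ 1 := abs_le.mpr ⟨by linarith, by linarith⟩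
        have hd11 : |(1 - w.1) - (1 - w'.1)| ≤ dist w w' := by
          have h : (1 - w.1) - (1 - w'.1) = -(w.1 - w'.1) := by ring
          rw [h, abs_neg]; exact hdw1
        have hd22 : |(1 - w.2) - (1 - w'.2)| ≤ dist w w' := by
          have h : (1 - w.2) - (1 - w'.2) = -(w.2 - w'.2) := by ring
          rw [h, abs_neg]; exact hdw2
        have hm1 : |s.1 * (1 - w.1) - s'.1 * (1 - w'.1)| ≤ dist s s' + D k * dist w w' :=
          mulbd15 hds1 hd11 hb1 hS'le
        have hm2 : |s.2 * w.2 - s'.2 * w'.2| ≤ dist s s' + D k * dist w w' :=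
          mulbd15 hds2 hdw2 hb2 hB'le
        have hm3 : |s.2 * (1 - w.2) - s'.2 * (1 - w'.2)| ≤ dist s s' + D k * dist w w' :=
          mulbd15 hds2 hd22 hb3 hB'le
        have hm4 : |s.1 * w.1 - s'.1 * w'.1| ≤ dist s s' + D k * dist w w' :=
          mulbd15 hds1 hdw1 hb4 hS'le
        have hlamsle : |1 - lams| ≤ 1 := abs_le.mpr ⟨by linarith, by linarith⟩
        have hlamble : |1 - lamb| ≤ 1 := abs_le.mpr ⟨by linarith, by linarith⟩
        have hA1 : |(s.1 * (1 - w.1) + s.2 * w.2 * (1 - lams)) -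
            (s'.1 * (1 - w'.1) + s'.2 * w'.2 * (1 - lams))| ≤
            2 * (dist s s' + D k * dist w w') := by
          have h : (s.1 * (1 - w.1) + s.2 * w.2 * (1 - lams)) -
              (s'.1 * (1 - w'.1) + s'.2 * w'.2 * (1 - lams)) =
              (s.1 * (1 - w.1) - s'.1 * (1 - w'.1)) +
              (1 - lams) * (s.2 * w.2 - s'.2 * w'.2) := by ring
          rw [h]
          calc |(s.1 * (1 - w.1) - s'.1 * (1 - w'.1)) +
              (1 - lams) * (s.2 * w.2 - s'.2 * w'.2)| ≤
              |s.1 * (1 - w.1) - s'.1 * (1 - w'.1)| +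
              |(1 - lams) * (s.2 * w.2 - s'.2 * w'.2)| := abs_add_le _ _
            _ ≤ (dist s s' + D k * dist w w') + 1 * (dist s s' + D k * dist w w') := by
                refine add_le_add hm1 ?_
                rw [abs_mul]
                exact mul_le_mul hlamsle hm2 (abs_nonneg _) zero_le_one
            _ = 2 * (dist s s' + D k * dist w w') := by ring
        have hA2 : |(s.2 * (1 - w.2) + s.1 * w.1 * (1 - lamb)) -
            (s'.2 * (1 - w'.2) + s'.1 * w'.1 * (1 - lamb))| ≤
            2 * (dist s s' + D k * dist w w') := by
          have h : (s.2 * (1 - w.2) + s.1 * w.1 * (1 - lamb)) -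
              (s'.2 * (1 - w'.2) + s'.1 * w'.1 * (1 - lamb)) =
              (s.2 * (1 - w.2) - s'.2 * (1 - w'.2)) +
              (1 - lamb) * (s.1 * w.1 - s'.1 * w'.1) := by ring
          rw [h]
          calc |(s.2 * (1 - w.2) - s'.2 * (1 - w'.2)) +
              (1 - lamb) * (s.1 * w.1 - s'.1 * w'.1)| ≤
              |s.2 * (1 - w.2) - s'.2 * (1 - w'.2)| +
              |(1 - lamb) * (s.1 * w.1 - s'.1 * w'.1)| := abs_add_le _ _
            _ ≤ (dist s s' + D k * dist w w') + 1 * (dist s s' + D k * dist w w') := by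
                refine add_le_add hm3 ?_
                rw [abs_mul]
                exact mul_le_mul hlamble hm4 (abs_nonneg _) zero_le_one
            _ = 2 * (dist s s' + D k * dist w w') := by ring
        rw [hf, hf, Prod.dist_eq]
        have hnn : (0:ℝ) ≤ 2 * (dist s s' + D k * dist w w') := by
          have h1 := dist_nonneg (x := s) (y := s')
          have h2 := mul_nonneg hDk.le (dist_nonneg (x := w) (y := w'))
          linarith
        apply max_le
        · rw [Real.dist_eq]
          show |(s.1 * (1 - w.1) + s.2 * w.2 * (1 - lams)) * y.1 -
            (s'.1 * (1 - w'.1) + s'.2 * w'.2 * (1 - lams)) * y.1| ≤ _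
          have h : (s.1 * (1 - w.1) + s.2 * w.2 * (1 - lams)) * y.1 -
              (s'.1 * (1 - w'.1) + s'.2 * w'.2 * (1 - lams)) * y.1 =
              ((s.1 * (1 - w.1) + s.2 * w.2 * (1 - lams)) -
               (s'.1 * (1 - w'.1) + s'.2 * w'.2 * (1 - lams))) * y.1 := by ring
          rw [h, abs_mul, abs_of_pos hy1p]
          calc _ ≤ (2 * (dist s s' + D k * dist w w')) * yhi k :=
                mul_le_mul hA1 hy1hi hy1p.le hnn
            _ = 2 * yhi k * (dist s s' + D k * dist w w') := by ring
        · rw [Real.dist_eq]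
          show |(s.2 * (1 - w.2) + s.1 * w.1 * (1 - lamb)) * y.2 -
            (s'.2 * (1 - w'.2) + s'.1 * w'.1 * (1 - lamb)) * y.2| ≤ _
          have h : (s.2 * (1 - w.2) + s.1 * w.1 * (1 - lamb)) * y.2 -
              (s'.2 * (1 - w'.2) + s'.1 * w'.1 * (1 - lamb)) * y.2 =
              ((s.2 * (1 - w.2) + s.1 * w.1 * (1 - lamb)) -
               (s'.2 * (1 - w'.2) + s'.1 * w'.1 * (1 - lamb))) * y.2 := by ring
          rw [h, abs_mul, abs_of_pos hy2p]
          calc _ ≤ (2 * (dist s s' + D k * dist w w')) * yhi k :=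
                mul_le_mul hA2 hy2hi hy2p.le hnn
            _ = 2 * yhi k * (dist s s' + D k * dist w w') := by ring
      -- (E) Lipschitz bound for the one-step value
      have hFlip : ∀ s ∈ X k, ∀ s' ∈ X k, ∀ w w' : ℝ × ℝ,
          0 ≤ w.1 → w.1 ≤ δ k → 0 ≤ w.2 → w.2 ≤ δ k →
          0 ≤ w'.1 → w'.1 ≤ δ k → 0 ≤ w'.2 → w'.2 ≤ δ k →
          |(∑ y ∈ Y k, p k y * J (k + 1) (f k s w y)) -
           (∑ y ∈ Y k, p k y * J (k + 1) (f k s' w' y))| ≤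
            C' * (2 * yhi k * (dist s s' + D k * dist w w')) := by
        intro s hs s' hs' w w' hu0 hu1 hv0 hv1 hu'0 hu'1 hv'0 hv'1
        have hterm : ∀ y ∈ Y k, |J (k + 1) (f k s w y) - J (k + 1) (f k s' w' y)| ≤
            C' * (2 * yhi k * (dist s s' + D k * dist w w')) := by
          intro y hy
          calc |J (k + 1) (f k s w y) - J (k + 1) (f k s' w' y)| ≤
              C' * dist (f k s w y) (f k s' w' y) :=
                hC' _ (hfX s hs w hu0 hu1 hv0 hv1 y hy) _ (hfX s' hs' w' hu'0 hu'1 hv'0 hv'1 y hy)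
            _ ≤ C' * (2 * yhi k * (dist s s' + D k * dist w w')) :=
                mul_le_mul_of_nonneg_left
                  (hflip s hs s' hs' w w' hu0 hu1 hv0 hv1 hu'0 hu'1 hv'0 hv'1 y hy) hC'0
        calc |(∑ y ∈ Y k, p k y * J (k + 1) (f k s w y)) -
            (∑ y ∈ Y k, p k y * J (k + 1) (f k s' w' y))| =
            |∑ y ∈ Y k, p k y * (J (k + 1) (f k s w y) - J (k + 1) (f k s' w' y))| := by
              rw [← Finset.sum_sub_distrib]
              congr 1
              exact Finset.sum_congr rfl fun y _ => (mul_sub _ _ _).symm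
          _ ≤ ∑ y ∈ Y k, |p k y * (J (k + 1) (f k s w y) - J (k + 1) (f k s' w' y))| :=
              Finset.abs_sum_le_sum_abs _ _
          _ ≤ ∑ y ∈ Y k, p k y * (C' * (2 * yhi k * (dist s s' + D k * dist w w'))) := by
              refine Finset.sum_le_sum fun y hy => ?_
              rw [abs_mul, abs_of_nonneg (hp0 k y hy).1]
              exact mul_le_mul_of_nonneg_left (hterm y hy) (hp0 k y hy).1
          _ = (∑ y ∈ Y k, p k y) * (C' * (2 * yhi k * (dist s s' + D k * dist w w'))) :=
              (Finset.sum_mul _ _ _).symm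
          _ = C' * (2 * yhi k * (dist s s' + D k * dist w w')) := by rw [hp1 k]; ring
      -- (F) assembly
      set Lw := 2 * (1 + q k) / (q k * Δ k) with hLwdef
      have hLw0 : 0 ≤ Lw := by
        rw [hLwdef]
        exact (div_pos (by linarith [hqk]) (mul_pos hqk hΔk)).le
      refine ⟨C' * (2 * yhi k) * (1 + D k * Lw), ?_, ?_⟩
      · refine mul_nonneg (mul_nonneg hC'0 (by linarith [hyh])) ?_
        linarith [mul_nonneg hDk.le hLw0]
      have key : ∀ s ∈ X k, ∀ s' ∈ X k,
          J k s ≤ J k s' + C' * (2 * yhi k) * (1 + D k * Lw) * dist s s' := by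
        intro s hs s' hs'
        have hbdd : BddAbove ((fun w => ∑ y ∈ Y k, p k y * J (k + 1) (f k s' w y)) '' U k s') := by
          refine ⟨(∑ y ∈ Y k, p k y * J (k + 1) (f k s' (δ k, 0) y)) + C' * (2 * yhi k) * D k, ?_⟩
          rintro x ⟨w, hwU, rfl⟩
          rw [hU] at hwU
          obtain ⟨⟨ha, hb⟩, ⟨hc, hd2⟩, -⟩ := hwU
          have hdw : dist w ((δ k, 0) : ℝ × ℝ) ≤ 1 := by
            rw [Prod.dist_eq]
            apply max_le
            · rw [Real.dist_eq]
              show |w.1 - δ k| ≤ 1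
              exact abs_le.mpr ⟨by linarith, by linarith⟩
            · rw [Real.dist_eq]
              show |w.2 - 0| ≤ 1
              rw [sub_zero]
              exact abs_le.mpr ⟨by linarith, by linarith⟩
          have hF2 := hFlip s' hs' s' hs' w (δ k, 0) ha hb hc hd2 hδk0.le le_rfl le_rfl hδk0.le
          rw [dist_self] at hF2
          have h1 := (abs_le.mp hF2).2
          have hcoef : (0:ℝ) ≤ C' * (2 * yhi k) * D k := by
            refine mul_nonneg (mul_nonneg hC'0 (by linarith [hyh])) hDk.le
          have h2 : C' * (2 * yhi k) * D k * dist w ((δ k, 0) : ℝ × ℝ) ≤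
              C' * (2 * yhi k) * D k := by
            linarith [mul_le_mul_of_nonneg_left hdw hcoef]
          linarith [h1, h2]
        have hne : ((fun w => ∑ y ∈ Y k, p k y * J (k + 1) (f k s w y)) '' U k s).Nonempty :=
          ⟨_, Set.mem_image_of_mem _ (hmemU s hs)⟩
        rw [hJ k hklt s hs, hJ k hklt s' hs']
        apply csSup_le hne
        rintro x ⟨w, hwU, rfl⟩
        have hwU' := hwU
        rw [hU] at hwU'
        obtain ⟨⟨ha, hb⟩, ⟨hc, hd2⟩, -⟩ := hwU'
        obtain ⟨w', hw'U, hdw⟩ := hperturb s hs s' hs' w hwU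
        have hw'U' := hw'U
        rw [hU] at hw'U'
        obtain ⟨⟨ha', hb'⟩, ⟨hc', hd2'⟩, -⟩ := hw'U'
        have h1 := (abs_le.mp (hFlip s hs s' hs' w w' ha hb hc hd2 ha' hb' hc' hd2')).2
        have h2 : (∑ y ∈ Y k, p k y * J (k + 1) (f k s' w' y)) ≤
            sSup ((fun w => ∑ y ∈ Y k, p k y * J (k + 1) (f k s' w y)) '' U k s') :=
          le_csSup hbdd (Set.mem_image_of_mem _ hw'U)
        have hcoef : (0:ℝ) ≤ C' * (2 * yhi k) * D k := by
          refine mul_nonneg (mul_nonneg hC'0 (by linarith [hyh])) hDk.le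
        have h3 : C' * (2 * yhi k) * D k * dist w w' ≤
            C' * (2 * yhi k) * D k * (Lw * dist s s') :=
          mul_le_mul_of_nonneg_left hdw hcoef
        linarith [h1, h2, h3]
      intro s hs s' hs'
      have k1 := key s hs s' hs'
      have k2 := key s' hs' s hs
      rw [dist_comm s' s] at k2
      rw [abs_sub_le_iff]
      constructor
      · linarith
      · linarith
  intro k hk
  exact main (N - k) k hk le_rfl
end

section
/- (Global Lipschitz continuity from local Hausdorff inclusions along arcs.) Let (M,ρ) be a metric space, X ⊆ ℝᵐ, a > 0, and let U be a map assigning to each x ∈ X a nonempty compact subset U(x) ⊆ M. Let τ ≥ 0. Assume: (1) any two distinct points x₁, x₂ ∈ X can be joined by a Lipschitz path γ : [w₁, w₂] → X with γ(w₁) = x₁, γ(w₂) = x₂ and length (total variation) at most a·|x₁ − x₂|; (2) for every such path γ there exists r₀ > 0 such that whenever w₁ ≤ t < s ≤ w₂ and γ([t,s]) is contained in the open ball of radius r₀ centered at γ(t), then U(γ(t)) ⊆ {m ∈ M : ρ(m, U(γ(s))) < τ'} for every τ' > τ·ℓ(γ; t, s), where ℓ(γ; t, s) denotes the total variation of γ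 over [t,s]. Then d_H(U(x₁), U(x₂)) ≤ a·τ·|x₁ − x₂| for all x₁, x₂ ∈ X. -/
open Metric

private lemma stmt17_key {M : Type*} [MetricSpace M] {m : ℕ}
    (X : Set (EuclideanSpace ℝ (Fin m))) (a : ℝ) (ha : 0 < a) (τ : ℝ) (hτ : 0 ≤ τ)
    (U : EuclideanSpace ℝ (Fin m) → Set M)
    (hUne : ∀ x ∈ X, (U x).Nonempty ∧ IsCompact (U x))
    (hpath : ∀ x₁ ∈ X, ∀ x₂ ∈ X, x₁ ≠ x₂ →
      ∃ w₁ w₂ : ℝ, w₁ ≤ w₂ ∧ ∃ γ : ℝ → EuclideanSpace ℝ (Fin m),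
        (∃ K : NNReal, LipschitzOnWith K γ (Set.Icc w₁ w₂)) ∧
        γ w₁ = x₁ ∧ γ w₂ = x₂ ∧ Set.MapsTo γ (Set.Icc w₁ w₂) X ∧
        eVariationOn γ (Set.Icc w₁ w₂) ≤ ENNReal.ofReal (a * dist x₁ x₂))
    (hlocal : ∀ w₁ w₂ : ℝ, ∀ γ : ℝ → EuclideanSpace ℝ (Fin m),
      w₁ ≤ w₂ → (∃ K : NNReal, LipschitzOnWith K γ (Set.Icc w₁ w₂)) →
      Set.MapsTo γ (Set.Icc w₁ w₂) X →
      ∃ r₀ > (0 : ℝ), ∀ t s : ℝ, w₁ ≤ t → t < s → s ≤ w₂ →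
        (∀ ξ ∈ Set.Icc t s, γ ξ ∈ ball (γ t) r₀) →
        ∀ τ' : ℝ, τ * (eVariationOn γ (Set.Icc t s)).toReal < τ' →
          U (γ t) ⊆ {z : M | infDist z (U (γ s)) < τ'}) :
    ∀ x₁ ∈ X, ∀ x₂ ∈ X, ∀ z ∈ U x₁, infDist z (U x₂) ≤ a * τ * dist x₁ x₂ := by
  intro x₁ hx₁ x₂ hx₂ z hz
  by_cases hxe : x₁ = x₂
  · subst hxe
    rw [infDist_zero_of_mem hz]
    positivity
  obtain ⟨w₁, w₂, hw, γ, hK, hγ₁, hγ₂, hmaps, hlen⟩ := hpath x₁ hx₁ x₂ hx₂ hxe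
  obtain ⟨r₀, hr₀, hloc⟩ := hlocal w₁ w₂ γ hw hK hmaps
  obtain ⟨K, hKlip⟩ := hK
  -- step size
  set δ : ℝ := r₀ / ((K : ℝ) + 1) with hδdef
  have hKpos : (0:ℝ) < (K : ℝ) + 1 := by positivity
  have hδpos : 0 < δ := by positivity
  -- finiteness of variation
  have hfin : eVariationOn γ (Set.Icc w₁ w₂) < ⊤ :=
    lt_of_le_of_lt hlen ENNReal.ofReal_lt_top
  have hmono : ∀ t s : ℝ, Set.Icc t s ⊆ Set.Icc w₁ w₂ →
      eVariationOn γ (Set.Icc t s) ≠ ⊤ := by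
    intro t s hsub
    exact ne_top_of_le_ne_top hfin.ne (eVariationOn.mono γ hsub)
  -- the point at stage n
  set p : ℕ → ℝ := fun n => min (w₁ + n * δ) w₂ with hp
  have hp_mem : ∀ n, p n ∈ Set.Icc w₁ w₂ := by
    intro n
    constructor
    · apply le_min _ hw
      nlinarith [Nat.cast_nonneg (α := ℝ) n]
    · exact min_le_right _ _
  have key : ∀ n : ℕ,
      infDist z (U (γ (p n))) ≤ τ * (eVariationOn γ (Set.Icc w₁ (p n))).toReal := by
    intro n
    induction n with
    | zero =>
      have hp0 : p 0 = w₁ := by simp [hp, hw]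
      rw [hp0, hγ₁, infDist_zero_of_mem hz]
      positivity
    | succ n ih =>
      by_cases hend : w₂ ≤ w₁ + n * δ
      · have he : p (n+1) = p n := by
          have h1 : p n = w₂ := min_eq_right hend
          have h2 : p (n+1) = w₂ := min_eq_right (by push_cast; nlinarith)
          rw [h1, h2]
        rw [he]; exact ih
      · push_neg at hend
        set t := p n with ht
        set s := p (n+1) with hs
        have htlt : t < s := by
          have h1 : t = w₁ + n * δ := min_eq_left hend.le
          rw [h1]
          refine lt_min ?_ hend
          push_cast; nlinarith
        have hts : s - t ≤ δ := by
          have h1 : t = w₁ + n * δ := min_eq_left hend.le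
          have h2 : s ≤ w₁ + ((n:ℝ)+1) * δ := by
            have := min_le_left (w₁ + ((n:ℕ)+1 : ℕ) * δ) w₂
            push_cast at this
            simp [hs, hp]
          rw [h1]; push_cast at h2 ⊢; nlinarith
        have htmem := hp_mem n
        have hsmem := hp_mem (n+1)
        -- ball condition
        have hball : ∀ ξ ∈ Set.Icc t s, γ ξ ∈ ball (γ t) r₀ := by
          intro ξ hξ
          have hξmem : ξ ∈ Set.Icc w₁ w₂ :=
            ⟨htmem.1.trans hξ.1, hξ.2.trans hsmem.2⟩
          have := hKlip.dist_le_mul ξ hξmem t htmem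
          rw [mem_ball]
          have hdle : dist ξ t ≤ δ := by
            rw [Real.dist_eq, abs_of_nonneg (by linarith [hξ.1])]
            linarith [hξ.1, hξ.2]
          have hKd : (K : ℝ) * dist ξ t ≤ (K : ℝ) * δ :=
            mul_le_mul_of_nonneg_left hdle K.2
          have : (K : ℝ) * δ < r₀ := by
            rw [hδdef]
            rw [div_eq_inv_mul, ← mul_assoc]
            have : (K : ℝ) * ((K : ℝ) + 1)⁻¹ < 1 := by
              rw [mul_inv_lt_iff₀ hKpos]; linarith
            nlinarith
          calc dist (γ ξ) (γ t) ≤ (K : ℝ) * dist ξ t := hKlip.dist_le_mul ξ hξmem t htmem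
              _ < r₀ := lt_of_le_of_lt hKd this
        -- step inequality: every b ∈ U (γ t) satisfies infDist b (U (γ s)) ≤ τ * ℓ(t,s)
        have hstep : ∀ b ∈ U (γ t),
            infDist b (U (γ s)) ≤ τ * (eVariationOn γ (Set.Icc t s)).toReal := by
          intro b hb
          by_contra hcon
          push_neg at hcon
          have h := hloc t s htmem.1 htlt hsmem.2 hball _ hcon hb
          exact lt_irrefl _ (Set.mem_setOf_eq ▸ h)
        -- combine with induction hypothesis
        have hUt : (U (γ t)).Nonempty := (hUne _ (hmaps htmem)).1
        have hadd : eVariationOn γ (Set.Icc w₁ t) + eVariationOn γ (Set.Icc t s)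
            = eVariationOn γ (Set.Icc w₁ s) := by
          have := eVariationOn.Icc_add_Icc γ (s := (Set.univ : Set ℝ))
            htmem.1 htlt.le (Set.mem_univ t)
          simpa [Set.univ_inter] using this
        have hsub1 : Set.Icc w₁ t ⊆ Set.Icc w₁ w₂ :=
          Set.Icc_subset_Icc le_rfl htmem.2
        have hsub2 : Set.Icc t s ⊆ Set.Icc w₁ w₂ :=
          Set.Icc_subset_Icc htmem.1 hsmem.2
        have htoReal : (eVariationOn γ (Set.Icc w₁ s)).toReal
            = (eVariationOn γ (Set.Icc w₁ t)).toReal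
              + (eVariationOn γ (Set.Icc t s)).toReal := by
          rw [← hadd, ENNReal.toReal_add (hmono _ _ hsub1) (hmono _ _ hsub2)]
        apply le_of_forall_pos_le_add
        intro ε hε
        have hlt : infDist z (U (γ t))
            < τ * (eVariationOn γ (Set.Icc w₁ t)).toReal + ε :=
          lt_of_le_of_lt ih (by linarith)
        obtain ⟨b, hb, hdb⟩ := (infDist_lt_iff hUt).mp hlt
        calc infDist z (U (γ s)) ≤ infDist b (U (γ s)) + dist z b :=
              infDist_le_infDist_add_dist
          _ ≤ τ * (eVariationOn γ (Set.Icc t s)).toReal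
              + (τ * (eVariationOn γ (Set.Icc w₁ t)).toReal + ε) := by
              have := hstep b hb
              linarith
          _ = τ * (eVariationOn γ (Set.Icc w₁ s)).toReal + ε := by
              rw [htoReal]; ring
  -- choose n with w₁ + n δ ≥ w₂
  obtain ⟨n, hn⟩ := exists_nat_ge ((w₂ - w₁) / δ)
  have hpn : p n = w₂ := by
    apply min_eq_right
    rw [div_le_iff₀ hδpos] at hn
    linarith
  have := key n
  rw [hpn, hγ₂] at this
  refine this.trans ?_
  have h1 : (eVariationOn γ (Set.Icc w₁ w₂)).toReal ≤ a * dist x₁ x₂ := by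
    have := ENNReal.toReal_mono ENNReal.ofReal_ne_top hlen
    rwa [ENNReal.toReal_ofReal (by positivity)] at this
  calc τ * (eVariationOn γ (Set.Icc w₁ w₂)).toReal ≤ τ * (a * dist x₁ x₂) :=
        mul_le_mul_of_nonneg_left h1 hτ
    _ = a * τ * dist x₁ x₂ := by ring

/-- Global Hausdorff-Lipschitz continuity of a compact-valued
multifunction from local Hausdorff inclusions along Lipschitz arcs:
`d_H(U(x₁), U(x₂)) ≤ a·τ·|x₁ − x₂|`. -/
theorem stmt17 {M : Type*} [MetricSpace M] {m : ℕ}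
    (X : Set (EuclideanSpace ℝ (Fin m))) (a : ℝ) (ha : 0 < a) (τ : ℝ) (hτ : 0 ≤ τ)
    (U : EuclideanSpace ℝ (Fin m) → Set M)
    (hUne : ∀ x ∈ X, (U x).Nonempty ∧ IsCompact (U x))
    (hpath : ∀ x₁ ∈ X, ∀ x₂ ∈ X, x₁ ≠ x₂ →
      ∃ w₁ w₂ : ℝ, w₁ ≤ w₂ ∧ ∃ γ : ℝ → EuclideanSpace ℝ (Fin m),
        (∃ K : NNReal, LipschitzOnWith K γ (Set.Icc w₁ w₂)) ∧
        γ w₁ = x₁ ∧ γ w₂ = x₂ ∧ Set.MapsTo γ (Set.Icc w₁ w₂) X ∧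
        eVariationOn γ (Set.Icc w₁ w₂) ≤ ENNReal.ofReal (a * dist x₁ x₂))
    (hlocal : ∀ w₁ w₂ : ℝ, ∀ γ : ℝ → EuclideanSpace ℝ (Fin m),
      w₁ ≤ w₂ → (∃ K : NNReal, LipschitzOnWith K γ (Set.Icc w₁ w₂)) →
      Set.MapsTo γ (Set.Icc w₁ w₂) X →
      ∃ r₀ > (0 : ℝ), ∀ t s : ℝ, w₁ ≤ t → t < s → s ≤ w₂ →
        (∀ ξ ∈ Set.Icc t s, γ ξ ∈ ball (γ t) r₀) →
        ∀ τ' : ℝ, τ * (eVariationOn γ (Set.Icc t s)).toReal < τ' →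
          U (γ t) ⊆ {z : M | infDist z (U (γ s)) < τ'}) :
    ∀ x₁ ∈ X, ∀ x₂ ∈ X, hausdorffDist (U x₁) (U x₂) ≤ a * τ * dist x₁ x₂ := by
  intro x₁ hx₁ x₂ hx₂
  apply hausdorffDist_le_of_infDist (by positivity)
  · exact fun z hz => stmt17_key X a ha τ hτ U hUne hpath hlocal x₁ hx₁ x₂ hx₂ z hz
  · intro z hz
    rw [dist_comm]
    exact stmt17_key X a ha τ hτ U hUne hpath hlocal x₂ hx₂ x₁ hx₁ z hz
end
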